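/- arXiv:1504.04131 — 2 statements merged into one kernel-verified Lean document; each statement's English description precedes it below -/
import Mathlib

section
/- Let b ≥ 2 be an integer, let k, r ∈ ℕ with v = v(k), and let f ∈ C^{v+r}[0,1]. Then f̂(k) = Σ_{i=0}^{r} (−1)^{v+i} · I^{(i)}(k) · ∫_0^1 f^{(v+i)}(x) dx + (−1)^{v+r} · ∫_0^1 f^{(v+r)}(x) · (W_k^{(r)}(x) − I^{(r)}(k)) dx. -/
open MeasureTheory Complex
open scoped ENNReal NNReal

noncomputable section

namespace WalshPaper

/-- `ω_b = exp(2π√-1/b)`. -/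
def omega (b : ℕ) : ℂ := Complex.exp (2 * Real.pi * Complex.I / b)

/-- `conj ω_b`. -/
def omegaBar (b : ℕ) : ℂ := (starRingEnd ℂ) (omega b)

/-- The `j`-th `b`-adic digit `ξ_j` of `x ∈ [0,1)` (the coefficient of `b^{-j}`),
taking the expansion with infinitely many digits different from `b-1`. -/
def xdigit (b j : ℕ) (x : ℝ) : ℕ := (⌊x * (b : ℝ) ^ j⌋ % (b : ℤ)).toNat

/-- The `k`-th `b`-adic Walsh function: `wal_k(x) = ω_b^(κ_1 ξ_{a_1} + ⋯ + κ_v ξ_{a_v})`,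
written as a sum over all digit positions of `k` (digits of `k` beyond position `k` vanish). -/
def wal (b k : ℕ) (x : ℝ) : ℂ :=
  omega b ^ ∑ j ∈ Finset.range k, (k / b ^ j % b) * xdigit b (j + 1) x

/-- The list of terms `κ_i b^{a_i - 1}` of the `b`-adic expansion of `k`, lowest first,
i.e. `[κ_v b^{a_v-1}, …, κ_1 b^{a_1-1}]`. -/
def terms (b k : ℕ) : List ℕ :=
  (((Nat.digits b k).zipIdx.map Prod.swap).filter fun p => p.2 ≠ 0).map fun p => p.2 * b ^ p.1

/-- `v(k)`, the number of nonzero `b`-adic digits of `k`. -/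
def nu (b k : ℕ) : ℕ := (terms b k).length

/-- The list `[a_1, …, a_v]` (decreasing). -/
def alist (b k : ℕ) : List ℕ :=
  ((((Nat.digits b k).zipIdx.map Prod.swap).filter fun p => p.2 ≠ 0).map fun p => p.1 + 1).reverse

/-- The list `[κ_v, κ_{v-1}, …, κ_1]` (corresponding digits, lowest first). -/
def kappas (b k : ℕ) : List ℕ :=
  (((Nat.digits b k).zipIdx.map Prod.swap).filter fun p => p.2 ≠ 0).map fun p => p.2

/-- `μ(k) = a_1 + ⋯ + a_v`. -/
def mu (b k : ℕ) : ℕ := (alist b k).sum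

/-- `μ_α(k) = a_1 + ⋯ + a_{min(α,v)}`. -/
def muAlpha (b α k : ℕ) : ℕ := ((alist b k).take α).sum

/-- `a_v`, the smallest exponent (junk value `0` for `k = 0`). -/
def aLow (b k : ℕ) : ℕ := ((alist b k).getLast?).getD 0

/-- `κ_v`, the lowest nonzero digit of `k`. -/
def kapLow (b k : ℕ) : ℕ := k / b ^ (aLow b k - 1) % b

/-- `μ̄_α(k)`: equals `a_1 + ⋯ + a_v + (α - v) a_v` if `v ≤ α`, and `a_1 + ⋯ + a_α` else. -/
def muBar (b α k : ℕ) : ℕ :=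
  if nu b k ≤ α then mu b k + (α - nu b k) * aLow b k else muAlpha b α k

/-- `k_{≤ n} = Σ_{i=1}^{min(n,v)} κ_i b^{a_i - 1}` (the `min(n,v)` highest terms). -/
def kHigh (b k n : ℕ) : ℕ := ((terms b k).reverse.take n).sum

/-- `k_{> n} = Σ_{i=n+1}^{v} κ_i b^{a_i - 1}` (the remaining lower terms). -/
def kLow (b k n : ℕ) : ℕ := ((terms b k).reverse.drop n).sum

/-- Auxiliary function defining `W` along the list of terms of `k`, lowest term first. -/
def WAux (b : ℕ) : List ℕ → ℝ → ℂ
  | [], _ => 1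
  | t :: rest, x => ∫ y in (0:ℝ)..x, (starRingEnd ℂ) (wal b t y) * WAux b rest y

/-- `W_k : [0,1] → ℂ`, defined by `W_0 = 1` and `W_k(x) = ∫_0^x conj(wal_{κ_v b^{a_v-1}}(y)) W_{k'}(y) dy`
with `k' = k - κ_v b^{a_v-1}`. -/
def W (b k : ℕ) (x : ℝ) : ℂ := WAux b (terms b k) x

/-- `I(k) = ∫_0^1 W_k(x) dx`. -/
def I (b k : ℕ) : ℂ := ∫ x in (0:ℝ)..1, W b k x

/-- The iterated functions `W_k^{(j)}`: `W_k^{(0)} = W_k`,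
`W_k^{(j+1)}(x) = ∫_0^x (W_k^{(j)}(y) - I^{(j)}(k)) dy` where `I^{(j)}(k) = ∫_0^1 W_k^{(j)}`. -/
def Wj (b k : ℕ) : ℕ → ℝ → ℂ
  | 0 => W b k
  | j + 1 => fun x => ∫ y in (0:ℝ)..x, (Wj b k j y - ∫ t in (0:ℝ)..1, Wj b k j t)

/-- `I^{(j)}(k) = ∫_0^1 W_k^{(j)}(x) dx`. -/
def Ij (b k j : ℕ) : ℂ := ∫ x in (0:ℝ)..1, Wj b k j x

/-- The `k`-th Walsh coefficient of `f : [0,1) → ℝ`. -/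
def walshCoeff (b : ℕ) (f : ℝ → ℝ) (k : ℕ) : ℂ :=
  ∫ x in (0:ℝ)..1, (f x : ℂ) * (starRingEnd ℂ) (wal b k x)

/-- The half-open unit cube `[0,1)^s`. -/
def cube (s : ℕ) : Set (Fin s → ℝ) := Set.univ.pi fun _ => Set.Ico (0:ℝ) 1

/-- The closed unit cube `[0,1]^s`. -/
def cubeC (s : ℕ) : Set (Fin s → ℝ) := Set.univ.pi fun _ => Set.Icc (0:ℝ) 1

/-- The `k⃗`-th Walsh coefficient of `f : [0,1)^s → ℝ`. -/
def walshCoeffS (b s : ℕ) (f : (Fin s → ℝ) → ℝ) (k : Fin s → ℕ) : ℂ :=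
  ∫ x in cube s, (f x : ℂ) * (starRingEnd ℂ) (∏ j, wal b (k j) (x j))

/-- `m_b = 2 sin(π/b)`. -/
def mb (b : ℕ) : ℝ := 2 * Real.sin (Real.pi / b)

/-- `M_b = max_{c=1,…,b-1} |1 - ω_b^{-c}|`. -/
def Mb (b : ℕ) : ℝ := if Even b then 2 else 2 * Real.sin ((b + 1) * Real.pi / (2 * b))

/-- `C_v(b) = (b m_b/(b - M_b)) (1 - (M_b/b)^v)`. -/
def Cv (b v : ℕ) : ℝ := (b * mb b / (b - Mb b)) * (1 - (Mb b / b) ^ v)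

/-- The partial derivative of `g` in the `j`-th coordinate. -/
def pderiv {s : ℕ} (j : Fin s) (g : (Fin s → ℝ) → ℝ) (x : Fin s → ℝ) : ℝ :=
  deriv (fun t => g (Function.update x j t)) (x j)

/-- The mixed partial derivative `f^{(m_1,…,m_s)} = (∂/∂x_1)^{m_1} ⋯ (∂/∂x_s)^{m_s} f`. -/
def mixedPartial {s : ℕ} (m : Fin s → ℕ) (f : (Fin s → ℝ) → ℝ) : (Fin s → ℝ) → ℝ :=
  (List.finRange s).foldr (fun j g => (fun h => pderiv j h)^[m j] g) f

/-- `f` has continuous mixed partial derivatives up to order `α_j` in each variable `x_j`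
on the unit cube. -/
def HasContMixedPartials {s : ℕ} (α : Fin s → ℕ) (f : (Fin s → ℝ) → ℝ) : Prop :=
  ∀ m : Fin s → ℕ, (∀ j, m j ≤ α j) →
    ContinuousOn (mixedPartial m f) (cubeC s) ∧
      ∀ j : Fin s, m j < α j → ∀ x ∈ cubeC s,
        DifferentiableAt ℝ (fun t => mixedPartial m f (Function.update x j t)) (x j)

/-- `b_r(x) = B_r(x)/r!`, the normalized Bernoulli polynomial. -/
def bpoly (r : ℕ) (x : ℝ) : ℝ := (Polynomial.aeval x) (Polynomial.bernoulli r) / r.factorial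

/-- `b̃_α(x-y)`. -/
def btilde (α : ℕ) (x y : ℝ) : ℝ :=
  if Even α then bpoly α |x - y| else (if x < y then -1 else 1) * bpoly α |x - y|


/-! ### Auxiliary development -/

section AuxBasic

/-- `b^{-a}` as a real number. -/
def Pw (b a : ℕ) : ℝ := ((b : ℝ) ^ a)⁻¹

lemma bR_pos {b : ℕ} (hb : 2 ≤ b) : (0:ℝ) < (b:ℝ) := by
  have : (2:ℝ) ≤ (b:ℝ) := by exact_mod_cast hb
  linarith

lemma Pw_pos {b : ℕ} (hb : 2 ≤ b) (a : ℕ) : 0 < Pw b a := by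
  have := bR_pos hb
  exact inv_pos.2 (pow_pos this a)

lemma Pw_mul_pow {b : ℕ} (hb : 2 ≤ b) (a i : ℕ) (hia : i ≤ a) :
    Pw b a * (b:ℝ) ^ i = ((b:ℕ)^(a-i) : ℝ)⁻¹ := by
  have hb0 : (b:ℝ) ≠ 0 := ne_of_gt (bR_pos hb)
  have h : (b:ℝ) ^ a = (b:ℝ) ^ i * (b:ℝ) ^ (a - i) := by
    rw [← pow_add]; congr 1; omega
  rw [Pw, h]
  push_cast
  field_simp

lemma omega_eq (b : ℕ) : omega b = Complex.exp ((((2 * Real.pi / b : ℝ)) : ℂ) * Complex.I) := by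
  unfold omega; congr 1; push_cast; ring

lemma norm_omega (b : ℕ) : ‖omega b‖ = 1 := by
  rw [omega_eq, Complex.norm_exp_ofReal_mul_I]

lemma norm_wal (b k : ℕ) (x : ℝ) : ‖wal b k x‖ = 1 := by
  rw [wal, norm_pow, norm_omega, one_pow]

lemma omega_pow_b {b : ℕ} (hb : 2 ≤ b) : omega b ^ b = 1 := by
  have hb0 : (b:ℂ) ≠ 0 := by
    have : b ≠ 0 := by omega
    exact_mod_cast this
  rw [omega, ← Complex.exp_nat_mul]
  rw [show (b:ℂ) * (2 * Real.pi * Complex.I / b) = 2 * Real.pi * Complex.I by field_simp]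
  exact Complex.exp_two_pi_mul_I

lemma omega_pow_ne_one {b d : ℕ} (hb : 2 ≤ b) (hd0 : 0 < d) (hdb : d < b) :
    omega b ^ d ≠ 1 := by
  intro h
  rw [omega, ← Complex.exp_nat_mul, Complex.exp_eq_one_iff] at h
  obtain ⟨n, hn⟩ := h
  have hb0 : (b:ℂ) ≠ 0 := by
    have : b ≠ 0 := by omega
    exact_mod_cast this
  have h2 : ((d:ℂ) - n * b) * (2 * Real.pi * Complex.I) = 0 := by
    field_simp at hn
    linear_combination (2 * Real.pi * Complex.I) * hn
  rcases mul_eq_zero.1 h2 with h3 | h3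
  · have h4 : (d:ℂ) = (n * b : ℤ) := by push_cast; linear_combination h3
    have h5 : (d:ℤ) = n * b := by exact_mod_cast h4
    rcases le_or_gt n 0 with hn0 | hn0
    · have : n * (b:ℤ) ≤ 0 := mul_nonpos_of_nonpos_of_nonneg hn0 (by positivity)
      omega
    · have h1n : (1:ℤ) ≤ n := hn0
      have : (b:ℤ) ≤ n * b := le_mul_of_one_le_left (by positivity) h1n
      omega
  · exact Complex.two_pi_I_ne_zero h3

lemma measurable_xdigit (b j : ℕ) : Measurable (xdigit b j) := by
  have h1 : Measurable fun x : ℝ => ⌊x * (b:ℝ)^j⌋ :=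
    Int.measurable_floor.comp (measurable_id.mul_const _)
  have h2 : Measurable fun n : ℤ => (n % (b:ℤ)).toNat := fun _ a => a
  exact h2.comp h1

lemma wal_measurable (b k : ℕ) : Measurable (wal b k) := by
  unfold wal
  apply Measurable.pow measurable_const
  exact Finset.measurable_sum _ fun j _ => (measurable_xdigit b (j+1)).const_mul _

lemma wal_zero (b : ℕ) (x : ℝ) : wal b 0 x = 1 := by simp [wal]

lemma digit_zero_of_le {b n i : ℕ} (hb : 2 ≤ b) (h : n ≤ i) : n / b ^ i % b = 0 := by
  have h2 : n < 2 ^ i := lt_of_le_of_lt h (Nat.lt_two_pow_self)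
  have : n < b ^ i := lt_of_lt_of_le h2 (Nat.pow_le_pow_left hb i)
  simp [Nat.div_eq_of_lt this]

lemma wal_add_high {b : ℕ} (hb : 2 ≤ b) {m d j : ℕ} (hm : m < b ^ j) (hd0 : 0 < d)
    (hdb : d < b) (x : ℝ) :
    wal b (m + d * b ^ j) x = wal b m x * omega b ^ (d * xdigit b (j + 1) x) := by
  set N := m + d * b ^ j with hN
  have hb0 : 0 < b := by omega
  have hNlt : N < b ^ (j + 1) := by
    have : d * b ^ j ≤ (b - 1) * b ^ j := Nat.mul_le_mul_right _ (by omega)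
    have hbj : 0 < b ^ j := pow_pos hb0 j
    have hpow : b ^ (j+1) = b * b ^ j := by rw [pow_succ]; ring
    have hbb : b * b ^ j = b ^ j + (b-1) * b ^ j := by
      have : b = 1 + (b-1) := by omega
      calc b * b ^ j = (1 + (b-1)) * b ^ j := by rw [← this]
      _ = b ^ j + (b-1) * b ^ j := by ring
    omega
  have hdig : ∀ i, N / b ^ i % b = m / b ^ i % b + (if i = j then d else 0) := by
    intro i
    rcases lt_trichotomy i j with hij | hij | hij
    · rw [if_neg (by omega)]
      have hsplit : b ^ j = b ^ (j - i - 1) * b * b ^ i := by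
        rw [mul_assoc, ← pow_succ']
        rw [← pow_add]; congr 1; omega
      have : N = m + d * (b ^ (j - i - 1) * b) * b ^ i := by
        rw [hN, hsplit]; ring
      rw [this, Nat.add_mul_div_right _ _ (pow_pos hb0 i)]
      have : m / b ^ i + d * (b ^ (j - i - 1) * b) = m / b ^ i + (d * b ^ (j-i-1)) * b := by ring
      rw [this, Nat.add_mul_mod_self_right, Nat.add_zero]
    · subst hij
      rw [if_pos rfl]
      have h1 : N / b ^ i = m / b ^ i + d := by
        rw [hN, Nat.add_mul_div_right _ _ (pow_pos hb0 i)]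
      rw [h1, Nat.div_eq_of_lt hm]
      simp [Nat.mod_eq_of_lt hdb]
    · have h1 : N / b ^ i = 0 := Nat.div_eq_of_lt (lt_of_lt_of_le hNlt (Nat.pow_le_pow_right (by omega) (by omega)))
      have h2 : m / b ^ i = 0 := Nat.div_eq_of_lt (lt_of_lt_of_le hm (Nat.pow_le_pow_right (by omega) (by omega)))
      rw [h1, h2, if_neg (by omega)]
      simp
  -- extend both sums to range R
  set R := N + j + 1 with hR
  have hsum : ∀ n : ℕ, n ≤ R →
      wal b n x = omega b ^ ∑ i ∈ Finset.range R, (n / b ^ i % b) * xdigit b (i+1) x := by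
    intro n hn
    rw [wal]
    congr 1
    apply Finset.sum_subset (Finset.range_subset_range.2 hn)
    intro i _ hi
    rw [Finset.mem_range, not_lt] at hi
    rw [digit_zero_of_le hb hi, zero_mul]
  rw [hsum N (by omega), hsum m (by omega)]
  have : ∑ i ∈ Finset.range R, (N / b ^ i % b) * xdigit b (i+1) x
      = (∑ i ∈ Finset.range R, (m / b ^ i % b) * xdigit b (i+1) x) + d * xdigit b (j+1) x := by
    have hterm : ∀ i ∈ Finset.range R,
        (N / b ^ i % b) * xdigit b (i+1) x
        = (m / b ^ i % b) * xdigit b (i+1) x + (if i = j then d * xdigit b (i+1) x else 0) := by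
      intro i _
      rw [hdig i]
      rcases eq_or_ne i j with h | h <;> simp [h, add_mul]
    rw [Finset.sum_congr rfl hterm, Finset.sum_add_distrib,
      Finset.sum_ite_eq' (Finset.range R) j (fun i => d * xdigit b (i+1) x)]
    rw [if_pos (Finset.mem_range.2 (by omega : j < R))]
  rw [this, pow_add]

lemma wal_single {b : ℕ} (hb : 2 ≤ b) {d j : ℕ} (hd0 : 0 < d) (hdb : d < b) (x : ℝ) :
    wal b (d * b ^ j) x = omega b ^ (d * xdigit b (j + 1) x) := by
  have := wal_add_high hb (pow_pos (by omega) j : 0 < b ^ j) hd0 hdb x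
  simpa [wal_zero] using this

lemma xdigit_period {b : ℕ} (hb : 2 ≤ b) (j : ℕ) (x : ℝ) :
    xdigit b (j + 1) (x + Pw b j) = xdigit b (j + 1) x := by
  unfold xdigit
  have hb0 : (b:ℝ) ≠ 0 := ne_of_gt (bR_pos hb)
  have h1 : (x + Pw b j) * (b:ℝ) ^ (j+1) = x * (b:ℝ)^(j+1) + (b:ℕ) := by
    rw [Pw, pow_succ]
    push_cast
    field_simp
  rw [h1, Int.floor_add_natCast]
  congr 1
  rw [show (⌊x * (b:ℝ)^(j+1)⌋ + (b:ℕ)) = ⌊x * (b:ℝ)^(j+1)⌋ + (b:ℤ) * 1 by push_cast; ring]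
  simp [Int.add_mul_emod_self_left]

lemma wal_single_periodic {b : ℕ} (hb : 2 ≤ b) {d j : ℕ} (hd0 : 0 < d) (hdb : d < b) :
    Function.Periodic (wal b (d * b ^ j)) (Pw b j) := by
  intro x
  rw [wal_single hb hd0 hdb, wal_single hb hd0 hdb, xdigit_period hb]

end AuxBasic
section AuxW

lemma floor_on_Ico {b : ℕ} (hb : 2 ≤ b) {a i c : ℕ} (hi : i ≤ a) {x : ℝ}
    (hx : x ∈ Set.Ico ((c:ℝ) * Pw b a) (((c:ℝ)+1) * Pw b a)) :
    ⌊x * (b:ℝ)^i⌋ = (c / b^(a-i) : ℕ) := by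
  set m := b^(a-i) with hm
  have hm0 : 0 < m := pow_pos (by omega) _
  have hmR : (0:ℝ) < (m:ℝ) := by exact_mod_cast hm0
  have key : Pw b a * (b:ℝ)^i = ((m:ℝ))⁻¹ := by
    rw [Pw_mul_pow hb a i hi]; norm_cast
  have hbi : (0:ℝ) < (b:ℝ)^i := pow_pos (bR_pos hb) i
  have hlow : ((c/m : ℕ):ℝ) ≤ x * (b:ℝ)^i := by
    calc ((c/m : ℕ):ℝ) ≤ (c:ℝ)/(m:ℝ) := Nat.cast_div_le
    _ = (c:ℝ) * Pw b a * (b:ℝ)^i := by rw [mul_assoc, key]; ring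
    _ ≤ x * (b:ℝ)^i := mul_le_mul_of_nonneg_right hx.1 (le_of_lt hbi)
  have hhigh : x * (b:ℝ)^i < ((c/m : ℕ):ℝ) + 1 := by
    have h1 : x * (b:ℝ)^i < ((c:ℝ)+1) * Pw b a * (b:ℝ)^i :=
      mul_lt_mul_of_pos_right hx.2 hbi
    have h2 : ((c:ℝ)+1) * Pw b a * (b:ℝ)^i = ((c:ℝ)+1)/(m:ℝ) := by
      rw [mul_assoc, key]; ring
    have h3 : (c:ℝ)+1 ≤ (m:ℝ) * (((c/m : ℕ):ℝ) + 1) := by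
      exact_mod_cast Nat.lt_mul_div_succ c hm0
    have h4 : ((c:ℝ)+1)/(m:ℝ) ≤ ((c/m : ℕ):ℝ) + 1 := by
      rw [div_le_iff₀ hmR]; linarith
    linarith [h1.trans_eq h2]
  exact Int.floor_eq_iff.2 ⟨by exact_mod_cast hlow, by push_cast; exact_mod_cast hhigh⟩

lemma xdigit_on_Ico {b : ℕ} (hb : 2 ≤ b) {a i c : ℕ} (hi : i ≤ a) {x : ℝ}
    (hx : x ∈ Set.Ico ((c:ℝ) * Pw b a) (((c:ℝ)+1) * Pw b a)) :
    xdigit b i x = c / b^(a-i) % b := by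
  unfold xdigit
  rw [floor_on_Ico hb hi hx]
  have hb0 : 0 < b := by omega
  omega

/-- Product of conjugated Walsh functions over a list of terms. -/
def Tprod (b : ℕ) (T : List ℕ) (x : ℝ) : ℂ :=
  (T.map fun t => (starRingEnd ℂ) (wal b t x)).prod

/-- Admissible lists of terms: entries `d·b^j` with `0<d<b` and strictly increasing
exponents, all `≥ a`. -/
inductive Adm (b : ℕ) : ℕ → List ℕ → Prop
  | nil (a : ℕ) : Adm b a []
  | cons (a d j : ℕ) (M : List ℕ) (hd0 : 0 < d) (hdb : d < b) (haj : a ≤ j)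
      (hM : Adm b (j+1) M) : Adm b a (d * b ^ j :: M)

/-- Lists of terms whose exponents are all `< a`. -/
def BelowAdm (b a : ℕ) (T : List ℕ) : Prop :=
  ∀ t ∈ T, ∃ d j, 0 < d ∧ d < b ∧ j + 1 ≤ a ∧ t = d * b ^ j

lemma Adm.mono {b a a' : ℕ} {L : List ℕ} (h : Adm b a' L) (haa : a ≤ a') : Adm b a L := by
  cases h with
  | nil => exact Adm.nil a
  | cons a' d j M hd0 hdb haj hM => exact Adm.cons a d j M hd0 hdb (le_trans haa haj) hM

lemma Tprod_nil (b : ℕ) (x : ℝ) : Tprod b [] x = 1 := rfl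

lemma Tprod_cons (b t : ℕ) (T : List ℕ) (x : ℝ) :
    Tprod b (t :: T) x = (starRingEnd ℂ) (wal b t x) * Tprod b T x := by
  simp [Tprod]

lemma conj_wal_measurable (b t : ℕ) :
    Measurable (fun x => (starRingEnd ℂ) (wal b t x)) := by
  have : Measurable (star : ℂ → ℂ) := continuous_star.measurable
  exact this.comp (wal_measurable b t)

lemma Tprod_measurable (b : ℕ) (T : List ℕ) : Measurable (Tprod b T) := by
  induction T with
  | nil => exact measurable_const
  | cons t T ih =>
    have := (conj_wal_measurable b t).mul ih
    convert this using 1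
    funext x
    simp [Tprod_cons]

lemma norm_Tprod (b : ℕ) (T : List ℕ) (x : ℝ) : ‖Tprod b T x‖ = 1 := by
  induction T with
  | nil => simp [Tprod]
  | cons t T ih =>
    rw [Tprod_cons, norm_mul, ih, starRingEnd_apply, norm_star, norm_wal, one_mul]

lemma Tprod_const_on {b : ℕ} (hb : 2 ≤ b) {a : ℕ} {T : List ℕ} (hT : BelowAdm b a T)
    {c : ℕ} {x y : ℝ} (hx : x ∈ Set.Ico ((c:ℝ) * Pw b a) (((c:ℝ)+1) * Pw b a))
    (hy : y ∈ Set.Ico ((c:ℝ) * Pw b a) (((c:ℝ)+1) * Pw b a)) :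
    Tprod b T x = Tprod b T y := by
  induction T with
  | nil => rfl
  | cons t T ih =>
    rw [Tprod_cons, Tprod_cons, ih (fun s hs => hT s (List.mem_cons_of_mem _ hs))]
    congr 2
    obtain ⟨d, j, hd0, hdb, hja, rfl⟩ := hT t List.mem_cons_self
    rw [wal_single hb hd0 hdb, wal_single hb hd0 hdb,
      xdigit_on_Ico hb hja hx, xdigit_on_Ico hb hja hy]

lemma II_mul {g w : ℝ → ℂ} {u v : ℝ} (hg : ContinuousOn g (Set.uIcc u v))
    (hw : Measurable w) (hwb : ∀ x, ‖w x‖ ≤ 1) :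
    IntervalIntegrable (fun x => w x * g x) volume u v := by
  have hgi : IntervalIntegrable g volume u v := hg.intervalIntegrable
  rw [intervalIntegrable_iff] at hgi ⊢
  apply MeasureTheory.Integrable.mono hgi
  · exact (hw.aestronglyMeasurable.mul
      ((hg.mono Set.uIoc_subset_uIcc).aestronglyMeasurable measurableSet_uIoc))
  · apply Filter.Eventually.of_forall
    intro x
    rw [norm_mul]
    calc ‖w x‖ * ‖g x‖ ≤ 1 * ‖g x‖ :=
      mul_le_mul_of_nonneg_right (hwb x) (norm_nonneg _)
    _ = ‖g x‖ := one_mul _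

lemma II_wal_WAux {b t : ℕ} {M : List ℕ} (hM : Continuous (WAux b M)) (u v : ℝ) :
    IntervalIntegrable (fun y => (starRingEnd ℂ) (wal b t y) * WAux b M y) volume u v :=
  II_mul (hM.continuousOn) (conj_wal_measurable b t)
    (fun x => by rw [starRingEnd_apply, norm_star, norm_wal])

lemma WAux_nil (b : ℕ) (x : ℝ) : WAux b [] x = 1 := rfl

lemma WAux_cons (b t : ℕ) (M : List ℕ) (x : ℝ) :
    WAux b (t :: M) x = ∫ y in (0:ℝ)..x, (starRingEnd ℂ) (wal b t y) * WAux b M y := rfl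

lemma WAux_continuous (b : ℕ) (L : List ℕ) : Continuous (WAux b L) := by
  induction L with
  | nil => exact (continuous_const : Continuous fun _ : ℝ => (1:ℂ))
  | cons t M ih =>
    show Continuous fun x => ∫ y in (0:ℝ)..x, (starRingEnd ℂ) (wal b t y) * WAux b M y
    exact intervalIntegral.continuous_primitive (fun u v => II_wal_WAux (t := t) ih u v) 0

lemma WAux_zero (b t : ℕ) (M : List ℕ) : WAux b (t :: M) 0 = 0 := by
  rw [WAux_cons, intervalIntegral.integral_same]

lemma periodic_zero_mul {f : ℝ → ℂ} {p : ℝ} (h : Function.Periodic f p) (h0 : f 0 = 0)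
    (c : ℕ) : f ((c:ℝ)*p) = 0 := by
  induction c with
  | zero => simpa using h0
  | succ n ih =>
    have h2 := h ((n:ℝ)*p)
    push_cast
    rw [add_mul, one_mul, h2]
    exact ih

lemma Pw_succ {b : ℕ} (hb : 2 ≤ b) (j : ℕ) : Pw b j = (b:ℝ) * Pw b (j+1) := by
  have hb0 : (b:ℝ) ≠ 0 := ne_of_gt (bR_pos hb)
  rw [Pw, Pw, pow_succ]
  field_simp

lemma W3core {b : ℕ} (hb : 2 ≤ b) {d j : ℕ} (hd0 : 0 < d) (hdb : d < b) {M : List ℕ}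
    (hper : Function.Periodic (WAux b M) (Pw b (j+1))) :
    ∫ y in (0:ℝ)..(Pw b j), (starRingEnd ℂ) (wal b (d * b^j) y) * WAux b M y = 0 := by
  have hcont := WAux_continuous b M
  have hq0 : 0 < Pw b (j+1) := Pw_pos hb (j+1)
  set q := Pw b (j+1) with hq
  set z := (starRingEnd ℂ) (omega b ^ d) with hz
  -- split into b pieces
  have hint : ∀ u v : ℝ, IntervalIntegrable
      (fun y => (starRingEnd ℂ) (wal b (d * b^j) y) * WAux b M y) volume u v :=
    II_wal_WAux hcont
  have hsplit : ∫ y in (0:ℝ)..(Pw b j), (starRingEnd ℂ) (wal b (d * b^j) y) * WAux b M y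
      = ∑ c ∈ Finset.range b, ∫ y in ((c:ℝ)*q)..(((c:ℝ)+1)*q),
          (starRingEnd ℂ) (wal b (d * b^j) y) * WAux b M y := by
    have h := intervalIntegral.sum_integral_adjacent_intervals
      (a := fun c : ℕ => (c:ℝ)*q) (n := b)
      (fun c _ => hint _ _)
    beta_reduce at h
    push_cast at h
    rw [show ((0:ℝ)*q) = 0 by ring] at h
    rw [show ((b:ℝ))*q = Pw b j by rw [hq, Pw_succ hb j]] at h
    exact h.symm
  rw [hsplit]
  have hpiece : ∀ c ∈ Finset.range b, ∫ y in ((c:ℝ)*q)..(((c:ℝ)+1)*q),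
      (starRingEnd ℂ) (wal b (d * b^j) y) * WAux b M y
      = z ^ c * ∫ y in (0:ℝ)..q, WAux b M y := by
    intro c hc
    rw [Finset.mem_range] at hc
    have hcc : ((c:ℝ)*q) < ((c:ℝ)+1)*q := by nlinarith [hq0]
    have hval : ∀ y ∈ Set.Ico ((c:ℝ)*q) (((c:ℝ)+1)*q),
        (starRingEnd ℂ) (wal b (d * b^j) y) = z ^ c := by
      intro y hy
      rw [wal_single hb hd0 hdb, xdigit_on_Ico hb (le_refl (j+1)) hy]
      rw [Nat.sub_self, pow_zero, Nat.div_one, Nat.mod_eq_of_lt hc, pow_mul, map_pow, hz]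
    have h1 : ∫ y in ((c:ℝ)*q)..(((c:ℝ)+1)*q), (starRingEnd ℂ) (wal b (d*b^j) y) * WAux b M y
        = ∫ y in ((c:ℝ)*q)..(((c:ℝ)+1)*q), z ^ c * WAux b M y := by
      rw [intervalIntegral.integral_of_le (le_of_lt hcc),
          intervalIntegral.integral_of_le (le_of_lt hcc),
          MeasureTheory.integral_Ioc_eq_integral_Ioo,
          MeasureTheory.integral_Ioc_eq_integral_Ioo]
      apply MeasureTheory.setIntegral_congr_fun measurableSet_Ioo
      intro y hy
      show (starRingEnd ℂ) (wal b (d*b^j) y) * WAux b M y = z ^ c * WAux b M y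
      rw [hval y ⟨le_of_lt hy.1, hy.2⟩]
    rw [h1, intervalIntegral.integral_const_mul]
    congr 1
    have h2 := hper.intervalIntegral_add_eq ((c:ℝ)*q) 0
    simp only [zero_add] at h2
    rw [show ((c:ℝ)+1)*q = (c:ℝ)*q + q by ring]
    exact h2
  rw [Finset.sum_congr rfl hpiece, ← Finset.sum_mul]
  have hzb : z ^ b = 1 := by
    rw [hz, ← map_pow, ← pow_mul, mul_comm d b, pow_mul, omega_pow_b hb, one_pow, map_one]
  have hz1 : z ≠ 1 := by
    intro h
    apply omega_pow_ne_one hb hd0 hdb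
    have h2 := congrArg (starRingEnd ℂ) h
    rw [hz] at h2
    simpa using h2
  rw [geom_sum_eq hz1 b, hzb, sub_self, zero_div, zero_mul]

lemma WAux_periodic {b : ℕ} (hb : 2 ≤ b) : ∀ {L : List ℕ} {a : ℕ}, Adm b a L →
    Function.Periodic (WAux b L) (Pw b a) := by
  intro L
  induction L with
  | nil => intro a _ x; rfl
  | cons t M ih =>
    intro a hadm
    cases hadm with
    | cons _ d j M hd0 hdb haj hM =>
      have hperM : Function.Periodic (WAux b M) (Pw b (j+1)) := ih hM
      have hgper : Function.Periodic
          (fun y => (starRingEnd ℂ) (wal b (d*b^j) y) * WAux b M y) (Pw b j) := by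
        have h1 : Function.Periodic (fun y => (starRingEnd ℂ) (wal b (d*b^j) y)) (Pw b j) :=
          fun x => congrArg _ (wal_single_periodic (j := j) hb hd0 hdb x)
        have h2 : Function.Periodic (WAux b M) (Pw b j) := by
          have h3 := hperM.nat_mul b
          rwa [← Pw_succ hb j] at h3
        exact h1.mul h2
      have hzero := W3core hb hd0 hdb hperM
      intro x
      have hint := II_wal_WAux (t := d*b^j) (b := b) (WAux_continuous b M)
      have htail : ∫ y in x..(x + Pw b a),
          (starRingEnd ℂ) (wal b (d*b^j) y) * WAux b M y = 0 := by
        have hb1 : (0:ℝ) < (b:ℝ)^a := pow_pos (bR_pos hb) a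
        have hb2 : (0:ℝ) < (b:ℝ)^j := pow_pos (bR_pos hb) j
        have hPa : Pw b a = ((b^(j-a) : ℕ) : ℝ) * Pw b j := by
          rw [Pw, Pw]
          push_cast
          field_simp
          rw [← pow_add]
          congr 1
          omega
        have hsm := hgper.intervalIntegral_add_zsmul_eq ((b^(j-a):ℕ):ℤ) x hint
        have hone := hgper.intervalIntegral_add_eq x 0
        simp only [zero_add] at hone
        rw [show x + Pw b a = x + ((b^(j-a):ℕ):ℤ) • Pw b j by
          rw [hPa, zsmul_eq_mul]; push_cast; ring]
        rw [hsm, hone, hzero, smul_zero]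
      have hadd : WAux b (d*b^j :: M) (x + Pw b a) = WAux b (d*b^j :: M) x
          + ∫ y in x..(x + Pw b a), (starRingEnd ℂ) (wal b (d*b^j) y) * WAux b M y := by
        rw [WAux_cons, WAux_cons,
          ← intervalIntegral.integral_add_adjacent_intervals (hint 0 x) (hint x _)]
      rw [hadd, htail, add_zero]

lemma WAux_vanish {b : ℕ} (hb : 2 ≤ b) {d j : ℕ} (hd0 : 0 < d) (hdb : d < b) {M : List ℕ}
    (hM : Adm b (j+1) M) (c : ℕ) : WAux b (d * b^j :: M) ((c:ℝ) * Pw b j) = 0 := by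
  have hadm : Adm b j (d * b^j :: M) := Adm.cons j d j M hd0 hdb (le_refl j) hM
  exact periodic_zero_mul (WAux_periodic hb hadm) (WAux_zero b _ M) c

end AuxW
section AuxParts

lemma integral_congr_Ioo {f g : ℝ → ℂ} {u v : ℝ} (huv : u ≤ v)
    (h : ∀ x ∈ Set.Ioo u v, f x = g x) : ∫ x in u..v, f x = ∫ x in u..v, g x := by
  rw [intervalIntegral.integral_of_le huv, intervalIntegral.integral_of_le huv,
    MeasureTheory.integral_Ioc_eq_integral_Ioo, MeasureTheory.integral_Ioc_eq_integral_Ioo]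
  exact MeasureTheory.setIntegral_congr_fun measurableSet_Ioo h

lemma primitive_hasDerivWithinAt_Ioi {g : ℝ → ℂ}
    (hint : ∀ u v : ℝ, IntervalIntegrable g volume u v)
    (hmeas : Measurable g) {x : ℝ} (hcx : ContinuousWithinAt g (Set.Ici x) x) :
    HasDerivWithinAt (fun y => ∫ t in (0:ℝ)..y, g t) (g x) (Set.Ioi x) x := by
  have hsm : StronglyMeasurableAtFilter g (nhdsWithin x (Set.Ioi x)) volume :=
    ⟨Set.univ, Filter.univ_mem, hmeas.aestronglyMeasurable.restrict⟩
  have h := intervalIntegral.integral_hasDerivWithinAt_right (hint 0 x)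
      (s := Set.Ici x) (t := Set.Ioi x) hsm (hcx.mono Set.Ioi_subset_Ici_self)
  exact h.mono Set.Ioi_subset_Ici_self

lemma wal_continuousWithinAt_Ici {b : ℕ} (hb : 2 ≤ b) {d j : ℕ} (hd0 : 0 < d)
    (hdb : d < b) (x : ℝ) :
    ContinuousWithinAt (fun y => (starRingEnd ℂ) (wal b (d * b ^ j) y)) (Set.Ici x) x := by
  have hbj : (0:ℝ) < (b:ℝ)^(j+1) := pow_pos (bR_pos hb) (j+1)
  set u : ℝ := ((⌊x * (b:ℝ)^(j+1)⌋ : ℝ) + 1) / (b:ℝ)^(j+1) with hu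
  have hxu : x < u := by
    rw [hu, lt_div_iff₀ hbj]
    exact Int.lt_floor_add_one _
  have hfl : ∀ y ∈ Set.Ico x u, ⌊y * (b:ℝ)^(j+1)⌋ = ⌊x * (b:ℝ)^(j+1)⌋ := by
    intro y hy
    rw [Int.floor_eq_iff]
    constructor
    · exact le_trans (Int.floor_le _) (mul_le_mul_of_nonneg_right hy.1 (le_of_lt hbj))
    · have := mul_lt_mul_of_pos_right hy.2 hbj
      rw [hu, div_mul_cancel₀ _ (ne_of_gt hbj)] at this
      exact this
  apply ContinuousWithinAt.congr_of_eventuallyEq (continuousWithinAt_const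
    (b := (starRingEnd ℂ) (wal b (d * b ^ j) x)))
  · have hmem : Set.Ico x u ∈ nhdsWithin x (Set.Ici x) :=
      Ico_mem_nhdsGE hxu
    apply Filter.eventuallyEq_of_mem hmem
    intro y hy
    show (starRingEnd ℂ) (wal b (d * b ^ j) y) = (starRingEnd ℂ) (wal b (d * b ^ j) x)
    rw [wal_single hb hd0 hdb, wal_single hb hd0 hdb]
    unfold xdigit
    rw [hfl y hy]
  · rfl

lemma Npq {b : ℕ} (hb : 2 ≤ b) (j : ℕ) : ((b^j : ℕ) : ℝ) * Pw b j = 1 := by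
  rw [Pw]
  push_cast
  field_simp


lemma split_unit {b j : ℕ} (hb : 2 ≤ b) (F : ℝ → ℂ)
    (hint : ∀ c : ℕ, c < b^j →
      IntervalIntegrable F volume ((c:ℝ)*Pw b j) (((c:ℝ)+1)*Pw b j)) :
    ∫ x in (0:ℝ)..1, F x
      = ∑ c ∈ Finset.range (b^j), ∫ x in ((c:ℝ)*Pw b j)..(((c:ℝ)+1)*Pw b j), F x := by
  have hcast : ∀ c : ℕ, (((c+1:ℕ)):ℝ) * Pw b j = ((c:ℝ)+1)*Pw b j := by
    intro c; push_cast; ring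
  have h := intervalIntegral.sum_integral_adjacent_intervals
    (f := F) (μ := volume) (a := fun c : ℕ => (c:ℝ)*Pw b j) (n := b^j)
    (fun c hc => by
      show IntervalIntegrable F volume ((c:ℝ)*Pw b j) ((((c+1:ℕ)):ℝ) * Pw b j)
      rw [hcast c]
      exact hint c hc)
  have h0 : ((0:ℕ):ℝ) * Pw b j = 0 := by push_cast; ring
  have h1 : ((b^j:ℕ):ℝ) * Pw b j = 1 := Npq hb j
  have h' : ∑ k ∈ Finset.range (b^j), ∫ x in ((k:ℝ)*Pw b j)..(((k+1:ℕ):ℝ)*Pw b j), F x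
      = ∫ x in (((0:ℕ):ℝ)*Pw b j)..(((b^j:ℕ):ℝ)*Pw b j), F x := h
  rw [h0, h1] at h'
  rw [← h']
  apply Finset.sum_congr rfl
  intro c _
  rw [hcast c]

set_option maxHeartbeats 1000000 in
/-- The main multiple-integration-by-parts lemma. -/
lemma parts {b : ℕ} (hb : 2 ≤ b) :
    ∀ (L : List ℕ) {a : ℕ} (T : List ℕ) (φ : ℕ → ℝ → ℂ),
      Adm b a L → BelowAdm b a T →
      (∀ i ≤ L.length, ContinuousOn (φ i) (Set.Icc 0 1)) →
      (∀ i < L.length, ∀ x ∈ Set.Ioo (0:ℝ) 1, HasDerivWithinAt (φ i) (φ (i+1) x) (Set.Ioi x) x) →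
      ∫ x in (0:ℝ)..1, Tprod b T x * (φ L.length x * WAux b L x)
        = (-1)^L.length * ∫ x in (0:ℝ)..1, Tprod b (L.reverse ++ T) x * φ 0 x := by
  intro L
  induction L with
  | nil =>
    intro a T φ _ _ _ _
    simp only [List.length_nil, pow_zero, one_mul, List.reverse_nil, List.nil_append]
    apply integral_congr_Ioo zero_le_one
    intro x _
    rw [WAux_nil]
    ring
  | cons s M ih =>
    intro a T φ hadm hT hφc hφd
    cases hadm with
    | cons _ d j M hd0 hdb haj hM =>
      set n := M.length with hn
      have hlen : (d * b ^ j :: M).length = n + 1 := by simp [hn]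
      rw [hlen]
      set q := Pw b j with hq
      set N := b ^ j with hN
      have hq0 : 0 < q := Pw_pos hb j
      have hNq : ((N:ℕ):ℝ) * q = 1 := Npq hb j
      have hWM := WAux_continuous b M
      have hWL := WAux_continuous b (d * b ^ j :: M)
      set g : ℝ → ℂ := fun y => (starRingEnd ℂ) (wal b (d * b ^ j) y) * WAux b M y with hg
      have hgint : ∀ u v : ℝ, IntervalIntegrable g volume u v := II_wal_WAux hWM
      have hgmeas : Measurable g := (conj_wal_measurable b _).mul hWM.measurable
      have hTj : BelowAdm b j T := by
        intro t ht
        obtain ⟨d', j', h1, h2, h3, h4⟩ := hT t ht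
        exact ⟨d', j', h1, h2, le_trans h3 haj, h4⟩
      have hTsT : BelowAdm b (j+1) (d * b ^ j :: T) := by
        intro t ht
        rcases List.mem_cons.1 ht with h | h
        · exact ⟨d, j, hd0, hdb, le_refl _, h⟩
        · obtain ⟨d', j', h1, h2, h3, h4⟩ := hT t h
          exact ⟨d', j', h1, h2, by omega, h4⟩
      -- subinterval facts
      have hsub : ∀ c : ℕ, c < N → Set.uIcc ((c:ℝ)*q) (((c:ℝ)+1)*q) ⊆ Set.Icc 0 1 := by
        intro c hc
        have h1 : (c:ℝ)*q ≤ ((c:ℝ)+1)*q := by nlinarith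
        rw [Set.uIcc_of_le h1]
        apply Set.Icc_subset_Icc
        · positivity
        · rw [← hNq]
          have : (c:ℝ)+1 ≤ (N:ℝ) := by exact_mod_cast hc
          nlinarith
      -- integrands
      have hint1 : ∀ c : ℕ, c < N → IntervalIntegrable
          (fun x => Tprod b T x * (φ (n+1) x * WAux b (d * b ^ j :: M) x)) volume ((c:ℝ)*q) (((c:ℝ)+1)*q) := by
        intro c hc
        exact II_mul (((hφc (n+1) (le_refl _)).mono (hsub c hc)).mul (hWL.continuousOn))
          (Tprod_measurable b T) (fun x => le_of_eq (norm_Tprod b T x))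
      have hint2 : ∀ u v : ℝ, Set.uIcc u v ⊆ Set.Icc 0 1 → IntervalIntegrable
          (fun x => φ (n+1) x * WAux b (d * b ^ j :: M) x) volume u v :=
        fun u v hs => (((hφc (n+1) (le_refl _)).mono hs).mul hWL.continuousOn).intervalIntegrable
      have hint3 : ∀ u v : ℝ, Set.uIcc u v ⊆ Set.Icc 0 1 → IntervalIntegrable
          (fun x => φ n x * g x) volume u v := by
        intro u v hs
        have heq : (fun x => φ n x * g x)
            = fun x => (starRingEnd ℂ) (wal b (d * b ^ j) x) * (φ n x * WAux b M x) := by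
          funext x
          simp only [hg]
          ring
        rw [heq]
        exact II_mul (((hφc n (by omega)).mono hs).mul hWM.continuousOn)
          (conj_wal_measurable b _)
          (fun x => by rw [starRingEnd_apply, norm_star, norm_wal])
      have hint4 : ∀ u v : ℝ, Set.uIcc u v ⊆ Set.Icc 0 1 → IntervalIntegrable
          (fun x => Tprod b (d * b ^ j :: T) x * (φ n x * WAux b M x)) volume u v := by
        intro u v hs
        exact II_mul (((hφc n (by omega)).mono hs).mul hWM.continuousOn)
          (Tprod_measurable b _) (fun x => le_of_eq (norm_Tprod b _ x))
      -- the key per-interval computation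
      have key : ∀ c : ℕ, c < N →
          ∫ x in ((c:ℝ)*q)..(((c:ℝ)+1)*q), Tprod b T x * (φ (n+1) x * WAux b (d*b^j :: M) x)
          = - ∫ x in ((c:ℝ)*q)..(((c:ℝ)+1)*q), Tprod b (d*b^j :: T) x * (φ n x * WAux b M x) := by
        intro c hc
        have hle : ((c:ℝ)*q) ≤ ((c:ℝ)+1)*q := by nlinarith
        have hIcc : Set.Icc ((c:ℝ)*q) (((c:ℝ)+1)*q) ⊆ Set.Icc 0 1 := by
          have h := hsub c hc
          rwa [Set.uIcc_of_le hle] at h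
        have hcq : (c:ℝ)*q ∈ Set.Ico ((c:ℝ)*q) (((c:ℝ)+1)*q) := ⟨le_refl _, by nlinarith⟩
        have hIoosub : Set.Ioo ((c:ℝ)*q) (((c:ℝ)+1)*q) ⊆ Set.Ioo 0 1 := by
          intro x hx
          have h0 : 0 ≤ (c:ℝ)*q := by positivity
          have h1 : ((c:ℝ)+1)*q ≤ 1 := (hIcc (Set.right_mem_Icc.2 hle)).2
          exact ⟨lt_of_le_of_lt h0 hx.1, lt_of_lt_of_le hx.2 h1⟩
        have hW0 : WAux b (d*b^j :: M) ((c:ℝ)*q) = 0 := WAux_vanish hb hd0 hdb hM c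
        have hW1 : WAux b (d*b^j :: M) (((c:ℝ)+1)*q) = 0 := by
          have h := WAux_vanish hb hd0 hdb hM (c+1)
          push_cast at h
          exact h
        have hFTC : ∫ x in ((c:ℝ)*q)..(((c:ℝ)+1)*q),
            (φ (n+1) x * WAux b (d*b^j :: M) x + φ n x * g x) = 0 := by
          have hd' : ∀ x ∈ Set.Ioo ((c:ℝ)*q) (((c:ℝ)+1)*q),
              HasDerivWithinAt (fun y => φ n y * WAux b (d*b^j :: M) y)
                (φ (n+1) x * WAux b (d*b^j :: M) x + φ n x * g x) (Set.Ioi x) x := by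
            intro x hx
            have hx01 := hIoosub hx
            have h1 := hφd n (by omega) x hx01
            have h2 : HasDerivWithinAt (WAux b (d*b^j :: M)) (g x) (Set.Ioi x) x := by
              have hcx : ContinuousWithinAt g (Set.Ici x) x :=
                (wal_continuousWithinAt_Ici hb hd0 hdb x).mul
                  (hWM.continuousAt.continuousWithinAt)
              exact primitive_hasDerivWithinAt_Ioi hgint hgmeas hcx
            exact h1.mul h2
          have hcontu : ContinuousOn (fun y => φ n y * WAux b (d*b^j :: M) y)
              (Set.Icc ((c:ℝ)*q) (((c:ℝ)+1)*q)) :=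
            ((hφc n (by omega)).mono hIcc).mul hWL.continuousOn
          have hintu' := (hint2 _ _ (hsub c hc)).add (hint3 _ _ (hsub c hc))
          have h := intervalIntegral.integral_eq_sub_of_hasDeriv_right_of_le hle hcontu hd' hintu'
          rw [h, hW0, hW1, mul_zero, mul_zero, sub_zero]
        have hAB : (∫ x in ((c:ℝ)*q)..(((c:ℝ)+1)*q), φ (n+1) x * WAux b (d*b^j::M) x)
            = - ∫ x in ((c:ℝ)*q)..(((c:ℝ)+1)*q), φ n x * g x := by
          have hadd := intervalIntegral.integral_add (hint2 _ _ (hsub c hc)) (hint3 _ _ (hsub c hc))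
          rw [hFTC] at hadd
          exact eq_neg_of_add_eq_zero_left hadd.symm
        have hc1 : ∫ x in ((c:ℝ)*q)..(((c:ℝ)+1)*q), Tprod b T x * (φ (n+1) x * WAux b (d*b^j::M) x)
            = Tprod b T ((c:ℝ)*q) * ∫ x in ((c:ℝ)*q)..(((c:ℝ)+1)*q), φ (n+1) x * WAux b (d*b^j::M) x := by
          rw [← intervalIntegral.integral_const_mul]
          apply integral_congr_Ioo hle
          intro x hx
          rw [Tprod_const_on hb hTj (c := c) ⟨le_of_lt hx.1, hx.2⟩ hcq]
        have hc2 : ∫ x in ((c:ℝ)*q)..(((c:ℝ)+1)*q), Tprod b (d*b^j :: T) x * (φ n x * WAux b M x)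
            = Tprod b T ((c:ℝ)*q) * ∫ x in ((c:ℝ)*q)..(((c:ℝ)+1)*q), φ n x * g x := by
          rw [← intervalIntegral.integral_const_mul]
          apply integral_congr_Ioo hle
          intro x hx
          rw [Tprod_cons, Tprod_const_on hb hTj (c := c) ⟨le_of_lt hx.1, hx.2⟩ hcq]
          simp only [hg]
          ring
        rw [hc1, hAB, hc2]
        ring
      -- sum over the N subintervals
      have htot1 := split_unit (j := j) hb
        (fun x => Tprod b T x * (φ (n+1) x * WAux b (d*b^j::M) x)) hint1
      have htot2 := split_unit (j := j) hb
        (fun x => Tprod b (d*b^j :: T) x * (φ n x * WAux b M x))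
        (fun c hc => hint4 _ _ (hsub c hc))
      have hIH := ih (a := j+1) (d*b^j :: T) φ hM hTsT
        (fun i hi => hφc i (by omega)) (fun i hi x hx => hφd i (by omega) x hx)
      rw [htot1, Finset.sum_congr rfl (fun c hc => key c (Finset.mem_range.1 hc)),
        Finset.sum_neg_distrib, ← htot2, hIH,
        show (d*b^j :: M).reverse ++ T = M.reverse ++ (d*b^j :: T) by simp]
      ring
end AuxParts
section AuxTerms

/-- Generalized terms list from a digit list starting at position `a`. -/
def TA (b a : ℕ) (ds : List ℕ) : List ℕ :=
  (((ds.zipIdx a).map Prod.swap).filter fun p => p.2 ≠ 0).map fun p => p.2 * b ^ p.1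

lemma TA_nil (b a : ℕ) : TA b a [] = [] := rfl

lemma terms_eq_TA (b k : ℕ) : terms b k = TA b 0 (Nat.digits b k) := rfl

lemma TA_cons (b a d : ℕ) (ds : List ℕ) :
    TA b a (d :: ds) = if d = 0 then TA b (a+1) ds else (d * b ^ a) :: TA b (a+1) ds := by
  rcases eq_or_ne d 0 with h | h <;> simp [TA, List.zipIdx_cons, h]

lemma TA_adm (b : ℕ) : ∀ (ds : List ℕ) (a : ℕ), (∀ d ∈ ds, d < b) → Adm b a (TA b a ds) := by
  intro ds
  induction ds with
  | nil => intro a _; exact Adm.nil a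
  | cons d ds ih =>
    intro a hds
    rw [TA_cons]
    rcases eq_or_ne d 0 with h | h
    · rw [if_pos h]
      exact (ih (a+1) (fun d' hd' => hds d' (List.mem_cons_of_mem _ hd'))).mono (by omega)
    · rw [if_neg h]
      exact Adm.cons a d a _ (Nat.pos_of_ne_zero h) (hds d List.mem_cons_self) (le_refl a)
        (ih (a+1) (fun d' hd' => hds d' (List.mem_cons_of_mem _ hd')))

lemma TA_append_single (b a d : ℕ) (ds : List ℕ) :
    TA b a (ds ++ [d]) = TA b a ds ++ (if d = 0 then [] else [d * b ^ (a + ds.length)]) := by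
  rcases eq_or_ne d 0 with h | h <;>
    simp [TA, List.zipIdx_append, List.zipIdx_cons, h, List.filter_append]

lemma wal_prod_TA {b : ℕ} (hb : 2 ≤ b) :
    ∀ (ds : List ℕ), (∀ d ∈ ds, d < b) → ∀ x : ℝ,
      wal b (Nat.ofDigits b ds) x = ((TA b 0 ds).map (fun t => wal b t x)).prod := by
  intro ds
  induction ds using List.reverseRecOn with
  | nil => intro _ x; simp [Nat.ofDigits_nil, wal_zero, TA_nil]
  | append_singleton ds d ih =>
    intro hds x
    have hds' : ∀ d' ∈ ds, d' < b := fun d' hd' => hds d' (List.mem_append_left _ hd')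
    have hdb : d < b := hds d (List.mem_append_right _ (List.mem_singleton_self d))
    have hofd : Nat.ofDigits b (ds ++ [d]) = Nat.ofDigits b ds + d * b ^ ds.length := by
      rw [Nat.ofDigits_append, Nat.ofDigits_singleton]
      push_cast
      ring
    have hm : Nat.ofDigits b ds < b ^ ds.length := Nat.ofDigits_lt_base_pow_length hb hds'
    rw [TA_append_single]
    rcases eq_or_ne d 0 with h | h
    · rw [if_pos h, List.append_nil, hofd, h]
      simp only [zero_mul, Nat.add_zero]
      exact ih hds' x
    · rw [if_neg h, hofd, wal_add_high hb hm (Nat.pos_of_ne_zero h) hdb x, ih hds' x]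
      rw [List.map_append, List.prod_append]
      simp only [List.map_cons, List.map_nil, List.prod_cons, List.prod_nil, mul_one]
      rw [wal_single hb (Nat.pos_of_ne_zero h) hdb x]
      simp [Nat.zero_add]

lemma terms_adm {b : ℕ} (hb : 2 ≤ b) (k : ℕ) : Adm b 0 (terms b k) := by
  rw [terms_eq_TA]
  exact TA_adm b _ 0 (fun d hd => Nat.digits_lt_base hb hd)

lemma wal_eq_prod_terms {b : ℕ} (hb : 2 ≤ b) (k : ℕ) (x : ℝ) :
    wal b k x = ((terms b k).map (fun t => wal b t x)).prod := by
  rw [terms_eq_TA]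
  have h := wal_prod_TA hb (Nat.digits b k) (fun d hd => Nat.digits_lt_base hb hd) x
  rwa [Nat.ofDigits_digits b k] at h

lemma Tprod_reverse_eq_conj {b : ℕ} (hb : 2 ≤ b) (k : ℕ) (x : ℝ) :
    Tprod b ((terms b k).reverse) x = (starRingEnd ℂ) (wal b k x) := by
  rw [wal_eq_prod_terms hb k x, Tprod, List.map_reverse, List.prod_reverse,
    map_list_prod (starRingEnd ℂ), List.map_map]
  rfl

end AuxTerms
section AuxWj

lemma W_eq_WAux (b k : ℕ) : W b k = WAux b (terms b k) := rfl

lemma Wj_zero_eq (b k : ℕ) : Wj b k 0 = W b k := rfl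

lemma Wj_continuous (b k : ℕ) : ∀ r, Continuous (Wj b k r) := by
  intro r
  induction r with
  | zero => exact WAux_continuous b (terms b k)
  | succ r ih =>
    show Continuous fun x => ∫ y in (0:ℝ)..x, (Wj b k r y - ∫ t in (0:ℝ)..1, Wj b k r t)
    exact intervalIntegral.continuous_primitive
      (fun u v => (ih.sub continuous_const).intervalIntegrable u v) 0

lemma Wj_succ_apply (b k r : ℕ) (x : ℝ) :
    Wj b k (r+1) x = ∫ y in (0:ℝ)..x, (Wj b k r y - Ij b k r) := rfl

lemma Wj_succ_zero (b k r : ℕ) : Wj b k (r+1) 0 = 0 := by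
  rw [Wj_succ_apply, intervalIntegral.integral_same]

lemma Wj_succ_one (b k r : ℕ) : Wj b k (r+1) 1 = 0 := by
  rw [Wj_succ_apply]
  rw [intervalIntegral.integral_sub ((Wj_continuous b k r).intervalIntegrable 0 1)
    (intervalIntegrable_const)]
  rw [intervalIntegral.integral_const]
  show Ij b k r - (1 - 0) • Ij b k r = 0
  simp

lemma Wj_hasDeriv (b k r : ℕ) (x : ℝ) :
    HasDerivWithinAt (Wj b k (r+1)) (Wj b k r x - Ij b k r) (Set.Ioi x) x := by
  have hc : Continuous fun y => Wj b k r y - Ij b k r :=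
    (Wj_continuous b k r).sub continuous_const
  exact primitive_hasDerivWithinAt_Ioi
    (fun u v => hc.intervalIntegrable u v) hc.measurable hc.continuousWithinAt

lemma Fc_lemma {f : ℝ → ℝ} {m : ℕ} (hf : ContDiffOn ℝ m f (Set.Icc 0 1)) :
    ∀ i ≤ m, ContinuousOn (fun x : ℝ => ((iteratedDerivWithin i f (Set.Icc 0 1) x : ℝ) : ℂ))
      (Set.Icc 0 1) := by
  intro i hi
  exact Complex.continuous_ofReal.comp_continuousOn
    (hf.continuousOn_iteratedDerivWithin (by exact_mod_cast hi) (uniqueDiffOn_Icc zero_lt_one))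

lemma Fd_lemma {f : ℝ → ℝ} {m : ℕ} (hf : ContDiffOn ℝ m f (Set.Icc 0 1)) :
    ∀ i < m, ∀ x ∈ Set.Ioo (0:ℝ) 1,
      HasDerivWithinAt (fun x : ℝ => ((iteratedDerivWithin i f (Set.Icc 0 1) x : ℝ) : ℂ))
        (((iteratedDerivWithin (i+1) f (Set.Icc 0 1) x : ℝ) : ℂ)) (Set.Ioi x) x := by
  intro i hi x hx
  have hUD : UniqueDiffOn ℝ (Set.Icc (0:ℝ) 1) := uniqueDiffOn_Icc zero_lt_one
  have hx' : x ∈ Set.Icc (0:ℝ) 1 := Set.Ioo_subset_Icc_self hx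
  have hdiff : DifferentiableOn ℝ (iteratedDerivWithin i f (Set.Icc 0 1)) (Set.Icc 0 1) :=
    hf.differentiableOn_iteratedDerivWithin (by exact_mod_cast hi) hUD
  have h1 : HasDerivWithinAt (iteratedDerivWithin i f (Set.Icc 0 1))
      (derivWithin (iteratedDerivWithin i f (Set.Icc 0 1)) (Set.Icc 0 1) x)
      (Set.Icc 0 1) x := (hdiff x hx').hasDerivWithinAt
  rw [← iteratedDerivWithin_succ] at h1
  have hmem : Set.Icc (0:ℝ) 1 ∈ nhdsWithin x (Set.Ioi x) :=
    Filter.mem_of_superset (Ioc_mem_nhdsGT_of_mem ⟨le_refl x, hx.2⟩)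
      (Set.Ioc_subset_Icc_self.trans (Set.Icc_subset_Icc (le_of_lt hx.1) (le_refl 1)))
  have h2 := h1.mono_of_mem_nhdsWithin hmem
  exact Complex.ofRealCLM.hasFDerivAt.comp_hasDerivWithinAt x h2

end AuxWj

section AuxFinal

lemma II01 {g : ℝ → ℂ} (hg : ContinuousOn g (Set.Icc 0 1)) :
    IntervalIntegrable g volume 0 1 := by
  apply ContinuousOn.intervalIntegrable
  rwa [Set.uIcc_of_le zero_le_one]

end AuxFinal
/-- Theorem 4.2 (another formula for the Walsh coefficients). -/
theorem walsh_coeff_formula_extra (b : ℕ) (hb : 2 ≤ b) (k r : ℕ) (f : ℝ → ℝ)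
    (hf : ContDiffOn ℝ (nu b k + r) f (Set.Icc 0 1)) :
    walshCoeff b f k =
      (∑ i ∈ Finset.range (r + 1), (-1) ^ (nu b k + i) * Ij b k i *
          (↑(∫ x in (0:ℝ)..1, iteratedDerivWithin (nu b k + i) f (Set.Icc 0 1) x) : ℂ)) +
        (-1) ^ (nu b k + r) *
          ∫ x in (0:ℝ)..1, Complex.ofReal (iteratedDerivWithin (nu b k + r) f (Set.Icc 0 1) x) *
            (Wj b k r x - Ij b k r) := by
  revert hf
  induction r with
  | zero =>
    intro hf
    have hf0 : ContDiffOn ℝ (nu b k : ℕ) f (Set.Icc 0 1) := by exact_mod_cast hf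
    clear hf
    have hf := hf0
    have hlen : (terms b k).length = nu b k := rfl
    have hparts := parts hb (terms b k) (a := 0) []
      (fun i x => ((iteratedDerivWithin i f (Set.Icc 0 1) x : ℝ) : ℂ))
      (terms_adm hb k) (fun t ht => absurd ht List.not_mem_nil)
      (fun i hi => Fc_lemma hf i (by rw [hlen] at hi; omega))
      (fun i hi x hx => Fd_lemma hf i (by rw [hlen] at hi; omega) x hx)

    beta_reduce at hparts
    rw [List.append_nil, hlen] at hparts
    have hL : ∫ x in (0:ℝ)..1, Tprod b [] x *
          (((iteratedDerivWithin (nu b k) f (Set.Icc 0 1) x : ℝ) : ℂ) * WAux b (terms b k) x)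
        = ∫ x in (0:ℝ)..1,
          ((iteratedDerivWithin (nu b k) f (Set.Icc 0 1) x : ℝ) : ℂ) * W b k x := by
      apply integral_congr_Ioo zero_le_one
      intro x _
      rw [Tprod_nil, one_mul, W_eq_WAux]
    have hR : ∫ x in (0:ℝ)..1, Tprod b ((terms b k).reverse) x *
          ((iteratedDerivWithin 0 f (Set.Icc 0 1) x : ℝ) : ℂ)
        = walshCoeff b f k := by
      rw [walshCoeff]
      apply integral_congr_Ioo zero_le_one
      intro x _
      rw [Tprod_reverse_eq_conj hb, iteratedDerivWithin_zero]
      ring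
    rw [hL, hR] at hparts
    have hneg1 : ((-1:ℂ))^(nu b k) * ((-1:ℂ))^(nu b k) = 1 := by
      rw [← mul_pow]; norm_num
    have hmain : walshCoeff b f k
        = (-1)^(nu b k) * ∫ x in (0:ℝ)..1,
            ((iteratedDerivWithin (nu b k) f (Set.Icc 0 1) x : ℝ) : ℂ) * W b k x := by
      rw [hparts, ← mul_assoc, hneg1, one_mul]
    simp only [Finset.sum_range_one, Nat.add_zero]
    have hcont : ContinuousOn
        (fun x : ℝ => ((iteratedDerivWithin (nu b k) f (Set.Icc 0 1) x : ℝ) : ℂ))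
        (Set.Icc 0 1) := Fc_lemma hf (nu b k) (le_refl _)
    have h1 : IntervalIntegrable
        (fun x => ((iteratedDerivWithin (nu b k) f (Set.Icc 0 1) x : ℝ) : ℂ) * Wj b k 0 x)
        volume 0 1 := II01 (hcont.mul (Wj_continuous b k 0).continuousOn)
    have h2 : IntervalIntegrable
        (fun x => ((iteratedDerivWithin (nu b k) f (Set.Icc 0 1) x : ℝ) : ℂ) * Ij b k 0)
        volume 0 1 := II01 (hcont.mul continuousOn_const)
    have hsplit : ∫ x in (0:ℝ)..1,
          ((iteratedDerivWithin (nu b k) f (Set.Icc 0 1) x : ℝ) : ℂ) * (Wj b k 0 x - Ij b k 0)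
        = (∫ x in (0:ℝ)..1,
            ((iteratedDerivWithin (nu b k) f (Set.Icc 0 1) x : ℝ) : ℂ) * W b k x)
          - Ij b k 0 * ∫ x in (0:ℝ)..1,
            ((iteratedDerivWithin (nu b k) f (Set.Icc 0 1) x : ℝ) : ℂ) := by
      have e1 : ∫ x in (0:ℝ)..1,
            ((iteratedDerivWithin (nu b k) f (Set.Icc 0 1) x : ℝ) : ℂ) * (Wj b k 0 x - Ij b k 0)
          = ∫ x in (0:ℝ)..1,
            (((iteratedDerivWithin (nu b k) f (Set.Icc 0 1) x : ℝ) : ℂ) * Wj b k 0 x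
              - ((iteratedDerivWithin (nu b k) f (Set.Icc 0 1) x : ℝ) : ℂ) * Ij b k 0) := by
        apply integral_congr_Ioo zero_le_one
        intro x _
        ring
      rw [e1, intervalIntegral.integral_sub h1 h2]
      have g1 : ∫ x in (0:ℝ)..1,
            ((iteratedDerivWithin (nu b k) f (Set.Icc 0 1) x : ℝ) : ℂ) * Wj b k 0 x
          = ∫ x in (0:ℝ)..1,
            ((iteratedDerivWithin (nu b k) f (Set.Icc 0 1) x : ℝ) : ℂ) * W b k x := by
        apply integral_congr_Ioo zero_le_one
        intro x _
        rw [Wj_zero_eq]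
      have g2 : ∫ x in (0:ℝ)..1,
            ((iteratedDerivWithin (nu b k) f (Set.Icc 0 1) x : ℝ) : ℂ) * Ij b k 0
          = Ij b k 0 * ∫ x in (0:ℝ)..1,
            ((iteratedDerivWithin (nu b k) f (Set.Icc 0 1) x : ℝ) : ℂ) := by
        rw [← intervalIntegral.integral_const_mul]
        apply integral_congr_Ioo zero_le_one
        intro x _
        ring
      rw [g1, g2]
    rw [hmain, hsplit, intervalIntegral.integral_ofReal]
    rw [Finset.sum_range_one]
    simp only [Nat.add_zero]
    ring
  | succ r ih =>
    intro hf
    have hfs : ContDiffOn ℝ ((nu b k + (r+1) : ℕ)) f (Set.Icc 0 1) := by exact_mod_cast hf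
    clear hf
    have hf := hfs
    have hIH := ih (by
      exact_mod_cast hf.of_le (by exact_mod_cast (by omega : nu b k + r ≤ nu b k + (r+1))))
    have hcont1 : ContinuousOn
        (fun x : ℝ => ((iteratedDerivWithin (nu b k + (r+1)) f (Set.Icc 0 1) x : ℝ) : ℂ))
        (Set.Icc 0 1) := Fc_lemma hf (nu b k + (r+1)) (by omega)
    have hcont0 : ContinuousOn
        (fun x : ℝ => ((iteratedDerivWithin (nu b k + r) f (Set.Icc 0 1) x : ℝ) : ℂ))
        (Set.Icc 0 1) := Fc_lemma hf (nu b k + r) (by omega)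
    have hA : IntervalIntegrable
        (fun x => ((iteratedDerivWithin (nu b k + (r+1)) f (Set.Icc 0 1) x : ℝ) : ℂ)
          * Wj b k (r+1) x) volume 0 1 :=
      II01 (hcont1.mul (Wj_continuous b k (r+1)).continuousOn)
    have hB : IntervalIntegrable
        (fun x => ((iteratedDerivWithin (nu b k + r) f (Set.Icc 0 1) x : ℝ) : ℂ)
          * (Wj b k r x - Ij b k r)) volume 0 1 :=
      II01 (hcont0.mul (((Wj_continuous b k r).sub continuous_const).continuousOn))
    have hFTC : ∫ x in (0:ℝ)..1,
        (((iteratedDerivWithin (nu b k + (r+1)) f (Set.Icc 0 1) x : ℝ) : ℂ) * Wj b k (r+1) x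
         + ((iteratedDerivWithin (nu b k + r) f (Set.Icc 0 1) x : ℝ) : ℂ)
            * (Wj b k r x - Ij b k r)) = 0 := by
      have hderiv : ∀ x ∈ Set.Ioo (0:ℝ) 1, HasDerivWithinAt
          (fun y => ((iteratedDerivWithin (nu b k + r) f (Set.Icc 0 1) y : ℝ) : ℂ)
            * Wj b k (r+1) y)
          (((iteratedDerivWithin (nu b k + (r+1)) f (Set.Icc 0 1) x : ℝ) : ℂ)
              * Wj b k (r+1) x
            + ((iteratedDerivWithin (nu b k + r) f (Set.Icc 0 1) x : ℝ) : ℂ)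
              * (Wj b k r x - Ij b k r)) (Set.Ioi x) x := by
        intro x hx
        exact (Fd_lemma hf (nu b k + r) (by omega) x hx).mul (Wj_hasDeriv b k r x)
      have hcontu : ContinuousOn
          (fun y => ((iteratedDerivWithin (nu b k + r) f (Set.Icc 0 1) y : ℝ) : ℂ)
            * Wj b k (r+1) y) (Set.Icc 0 1) :=
        hcont0.mul (Wj_continuous b k (r+1)).continuousOn
      have h := intervalIntegral.integral_eq_sub_of_hasDeriv_right_of_le zero_le_one
        hcontu hderiv (hA.add hB)
      rw [h, Wj_succ_one, Wj_succ_zero, mul_zero, mul_zero, sub_zero]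
    have hAB : ∫ x in (0:ℝ)..1,
          ((iteratedDerivWithin (nu b k + r) f (Set.Icc 0 1) x : ℝ) : ℂ)
            * (Wj b k r x - Ij b k r)
        = - ∫ x in (0:ℝ)..1,
          ((iteratedDerivWithin (nu b k + (r+1)) f (Set.Icc 0 1) x : ℝ) : ℂ)
            * Wj b k (r+1) x := by
      have hadd := intervalIntegral.integral_add hA hB
      rw [hFTC] at hadd
      exact eq_neg_of_add_eq_zero_right hadd.symm
    have h2 : IntervalIntegrable
        (fun x => ((iteratedDerivWithin (nu b k + (r+1)) f (Set.Icc 0 1) x : ℝ) : ℂ)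
          * Ij b k (r+1)) volume 0 1 := II01 (hcont1.mul continuousOn_const)
    have hsplit2 : ∫ x in (0:ℝ)..1,
          ((iteratedDerivWithin (nu b k + (r+1)) f (Set.Icc 0 1) x : ℝ) : ℂ) * Wj b k (r+1) x
        = Ij b k (r+1) * (∫ x in (0:ℝ)..1,
            ((iteratedDerivWithin (nu b k + (r+1)) f (Set.Icc 0 1) x : ℝ) : ℂ))
          + ∫ x in (0:ℝ)..1,
            ((iteratedDerivWithin (nu b k + (r+1)) f (Set.Icc 0 1) x : ℝ) : ℂ)
              * (Wj b k (r+1) x - Ij b k (r+1)) := by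
      have e1 : ∫ x in (0:ℝ)..1,
            ((iteratedDerivWithin (nu b k + (r+1)) f (Set.Icc 0 1) x : ℝ) : ℂ)
              * (Wj b k (r+1) x - Ij b k (r+1))
          = ∫ x in (0:ℝ)..1,
            (((iteratedDerivWithin (nu b k + (r+1)) f (Set.Icc 0 1) x : ℝ) : ℂ)
              * Wj b k (r+1) x
             - Ij b k (r+1) * ((iteratedDerivWithin (nu b k + (r+1)) f (Set.Icc 0 1) x : ℝ) : ℂ)) := by
        apply integral_congr_Ioo zero_le_one
        intro x _
        ring
      have h3 : IntervalIntegrable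
          (fun x => Ij b k (r+1)
            * ((iteratedDerivWithin (nu b k + (r+1)) f (Set.Icc 0 1) x : ℝ) : ℂ)) volume 0 1 :=
        II01 (continuousOn_const.mul hcont1)
      rw [e1, intervalIntegral.integral_sub hA h3, intervalIntegral.integral_const_mul]
      ring
    rw [Finset.sum_range_succ, hIH, hAB, hsplit2, intervalIntegral.integral_ofReal]
    ring

end WalshPaper
end
end

section
/- Let b = 2 and k ∈ ℕ with v = v(k). Then for every 1 ≤ q ≤ ∞, the L^q norm of W_k on [0,1] satisfies ‖W_k‖_{L^q} ≤ 2^{−μ(k) − v + (1 − 1/q)·min(1,v)}, and equality holds for q = 1 and for q = ∞. -/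
open MeasureTheory Complex
open scoped ENNReal NNReal

noncomputable section

namespace WalshPaper

/-- real Rademacher function `r_a`. -/
def Rad (a : ℕ) (x : ℝ) : ℝ := (-1 : ℝ) ^ xdigit 2 a x

lemma xdigit_two (a : ℕ) (x : ℝ) : xdigit 2 a x = (⌊x * 2 ^ a⌋ % 2).toNat := by
  norm_num [xdigit]

lemma Rad_eq (a : ℕ) (x : ℝ) :
    Rad a x = if ⌊x * 2 ^ a⌋ % 2 = 0 then 1 else -1 := by
  rw [Rad, xdigit_two]
  rcases Int.emod_two_eq_zero_or_one ⌊x * 2 ^ a⌋ with h | h <;> simp [h]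

lemma Rad_measurable (a : ℕ) : Measurable (Rad a) := by
  have hg : Measurable fun x : ℝ => ⌊x * 2 ^ a⌋ % 2 := by
    have h1 : Measurable fun x : ℝ => ⌊x * 2 ^ a⌋ := (measurable_id.mul_const _).floor
    exact (measurable_of_countable fun n : ℤ => n % 2).comp h1
  have : Measurable fun x : ℝ => if ⌊x * 2 ^ a⌋ % 2 = 0 then (1:ℝ) else -1 := by
    exact Measurable.ite (hg (measurableSet_singleton 0)) measurable_const measurable_const
  simpa only [← Rad_eq] using this

lemma abs_Rad (a : ℕ) (x : ℝ) : |Rad a x| = 1 := by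
  rw [Rad_eq]; split_ifs <;> norm_num

lemma Rad_le_one (a : ℕ) (x : ℝ) : ‖Rad a x‖ ≤ 1 := by
  rw [Real.norm_eq_abs, abs_Rad]

lemma Rad_periodic (a : ℕ) : Function.Periodic (Rad a) (2 * ((2:ℝ) ^ a)⁻¹) := by
  intro x
  have h2 : ((2:ℝ) ^ a) ≠ 0 := by positivity
  have : (x + 2 * ((2:ℝ) ^ a)⁻¹) * 2 ^ a = x * 2 ^ a + (2 : ℤ) := by
    push_cast; field_simp
  have hfl : ⌊(x + 2 * ((2:ℝ) ^ a)⁻¹) * 2 ^ a⌋ = ⌊x * 2 ^ a⌋ + 2 := by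
    rw [this, Int.floor_add_intCast]
  have hmod : (⌊x * 2 ^ a⌋ + 2) % 2 = ⌊x * 2 ^ a⌋ % 2 := by omega
  rw [Rad_eq, Rad_eq, hfl, hmod]

lemma Rad_one_of_mem {a : ℕ} {x : ℝ} (hx : x ∈ Set.Ico (0:ℝ) ((2:ℝ)^a)⁻¹) :
    Rad a x = 1 := by
  have h2 : (0:ℝ) < (2:ℝ) ^ a := by positivity
  have h0 : (0:ℝ) ≤ x * 2 ^ a := mul_nonneg hx.1 h2.le
  have h1 : x * 2 ^ a < 1 := by
    have hx2 := hx.2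
    calc x * 2 ^ a < ((2:ℝ)^a)⁻¹ * 2 ^ a := mul_lt_mul_of_pos_right hx2 h2
      _ = 1 := inv_mul_cancel₀ h2.ne'
  rw [Rad_eq, Int.floor_eq_zero_iff.mpr ⟨h0, h1⟩]; norm_num

lemma Rad_neg_one_of_mem {a : ℕ} {x : ℝ}
    (hx : x ∈ Set.Ico (((2:ℝ)^a)⁻¹) (2 * ((2:ℝ)^a)⁻¹)) :
    Rad a x = -1 := by
  have h2 : (0:ℝ) < (2:ℝ) ^ a := by positivity
  have h0 : (1:ℝ) ≤ x * 2 ^ a := by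
    rw [← inv_mul_cancel₀ h2.ne']
    exact mul_le_mul_of_nonneg_right hx.1 h2.le
  have h1 : x * 2 ^ a < 2 := by
    have := hx.2
    calc x * 2 ^ a < (2 * ((2:ℝ)^a)⁻¹) * 2 ^ a := by
          exact mul_lt_mul_of_pos_right this h2
      _ = 2 := by field_simp
  have hfloor : ⌊x * 2 ^ a⌋ = 1 := by
    rw [Int.floor_eq_iff]
    constructor <;> push_cast <;> linarith
  rw [Rad_eq, hfloor]; norm_num

/-- dyadic points at level `a`. -/
def Dyad (a : ℕ) : Set ℝ := {x : ℝ | ∃ n : ℤ, x * 2 ^ a = n}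

lemma Dyad_countable (a : ℕ) : (Dyad a).Countable := by
  have : Dyad a ⊆ Set.range fun n : ℤ => (n : ℝ) / 2 ^ a := by
    rintro x ⟨n, hn⟩
    refine ⟨n, ?_⟩
    have h2 : ((2:ℝ) ^ a) ≠ 0 := by positivity
    field_simp [← hn]
    linarith
  exact (Set.countable_range _).mono this

lemma Dyad_measure_zero (a : ℕ) : volume (Dyad a) = 0 :=
  (Dyad_countable a).measure_zero _

lemma Rad_neg {a : ℕ} {x : ℝ} (hx : x ∉ Dyad a) : Rad a (-x) = - Rad a x := by
  set t := x * 2 ^ a with ht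
  have hne : ∀ n : ℤ, t ≠ n := by
    intro n hn; exact hx ⟨n, hn⟩
  have hflt : (⌊t⌋ : ℝ) < t := lt_of_le_of_ne (Int.floor_le t) (by
    intro h; exact hne ⌊t⌋ h.symm)
  have hfloor : ⌊-x * 2 ^ a⌋ = -⌊t⌋ - 1 := by
    have : -x * 2 ^ a = -t := by ring
    rw [this]
    rw [Int.floor_eq_iff]
    constructor <;> push_cast
    · linarith [Int.lt_floor_add_one t]
    · linarith
  rw [Rad_eq, Rad_eq, hfloor]
  have := Int.emod_two_eq_zero_or_one ⌊t⌋
  rcases this with h | h <;> [skip; skip] <;>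
  · have h' : (-⌊t⌋ - 1) % 2 = 1 - ⌊t⌋ % 2 := by omega
    rw [h', ← ht, h]; norm_num



/-- Invariant propagated through the recursion: `f` is continuous, nonnegative,
`L`-periodic, even, with mean value `c` over a period. -/
structure Nice (f : ℝ → ℝ) (L c : ℝ) : Prop where
  cont : Continuous f
  nonneg : ∀ x, 0 ≤ f x
  per : Function.Periodic f L
  symm : ∀ x, f (-x) = f x
  mean : (∫ y in (0:ℝ)..L, f y) = L * c

lemma Nice.scale {f : ℝ → ℝ} {L c : ℝ} (hf : Nice f L c) (N : ℕ) :
    Nice f (N * L) c := by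
  refine ⟨hf.cont, hf.nonneg, by simpa using hf.per.nat_mul N, hf.symm, ?_⟩
  have h := hf.per.intervalIntegral_add_zsmul_eq (N : ℤ) 0
    (fun t₁ t₂ => hf.cont.intervalIntegrable t₁ t₂)
  simp only [zero_add, zsmul_eq_mul, Int.cast_natCast] at h
  rw [h, hf.mean]
  push_cast; ring

lemma exists_rep {f : ℝ → ℝ} {T : ℝ} (hT : 0 < T) (per : Function.Periodic f T)
    (symm : ∀ x, f (T - x) = f x) (x : ℝ) :
    ∃ y, y ∈ Set.Icc (0:ℝ) (T / 2) ∧ f x = f y := by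
  set z := T * Int.fract (x / T) with hz
  have hz0 : 0 ≤ z := mul_nonneg hT.le (Int.fract_nonneg _)
  have hzT : z < T := by
    have := Int.fract_lt_one (x / T)
    calc z < T * 1 := by exact mul_lt_mul_of_pos_left this hT
      _ = T := mul_one T
  have hxz : f x = f z := by
    have : z = x - ⌊x / T⌋ * T := by
      rw [hz, Int.fract]
      field_simp
    rw [this, per.sub_int_mul_eq]
  rcases le_or_gt z (T / 2) with h | h
  · exact ⟨z, ⟨hz0, h⟩, hxz⟩
  · refine ⟨T - z, ⟨by linarith, by linarith⟩, ?_⟩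
    rw [hxz, ← symm (T - z)]
    ring_nf

set_option maxHeartbeats 1600000 in
/-- The main analytic step of the induction. -/
lemma step (a : ℕ) {f' : ℝ → ℝ} {c' : ℝ} (hf' : Nice f' ((2:ℝ)^a)⁻¹ c') :
    Nice (fun x => ∫ y in (0:ℝ)..x, Rad a y * f' y)
        (2 * ((2:ℝ)^a)⁻¹) (((2:ℝ)^a)⁻¹ * c' / 2)
    ∧ (∀ x, (∫ y in (0:ℝ)..x, Rad a y * f' y) ≤ ((2:ℝ)^a)⁻¹ * c')
    ∧ (∫ y in (0:ℝ)..((2:ℝ)^a)⁻¹, Rad a y * f' y) = ((2:ℝ)^a)⁻¹ * c' := by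
  set L : ℝ := ((2:ℝ)^a)⁻¹ with hLdef
  have hL : 0 < L := by positivity
  set g : ℝ → ℝ := fun y => Rad a y * f' y with hgdef
  set f : ℝ → ℝ := fun x => ∫ y in (0:ℝ)..x, g y with hfdef
  -- integrability
  have gint : ∀ u v : ℝ, IntervalIntegrable g volume u v := by
    intro u v
    have h1 : IntervalIntegrable f' volume u v := hf'.cont.intervalIntegrable u v
    rw [intervalIntegrable_iff] at h1 ⊢
    exact h1.bdd_mul (Rad_measurable a).aestronglyMeasurable (Filter.Eventually.of_forall (Rad_le_one a))
  have fcont : Continuous f := intervalIntegral.continuous_primitive gint 0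
  -- periodicity of g
  have f'per2 : Function.Periodic f' (2 * L) := by
    have := hf'.per.nat_mul 2
    simpa using this
  have gper : Function.Periodic g (2 * L) := by
    intro x
    show Rad a (x + 2 * L) * f' (x + 2 * L) = Rad a x * f' x
    rw [Rad_periodic a x, f'per2 x]
  -- f' reflection
  have f'refl : ∀ x, f' (L - x) = f' x := by
    intro x
    have : L - x = -x + L := by ring
    rw [this, hf'.per (-x), hf'.symm x]
  have f'refl2 : ∀ x, f' (2 * L - x) = f' x := by
    intro x
    have : 2 * L - x = -x + 2 * L := by ring
    rw [this, f'per2 (-x), hf'.symm x]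
  -- first half: g = f' a.e. on subintervals of [0, L]
  have gf' : ∀ u v : ℝ, u ∈ Set.Icc (0:ℝ) L → v ∈ Set.Icc (0:ℝ) L →
      (∫ y in u..v, g y) = ∫ y in u..v, f' y := by
    intro u v hu hv
    apply intervalIntegral.integral_congr_ae
    have hne : ∀ᵐ y : ℝ, y ∉ ({L} : Set ℝ) :=
      measure_eq_zero_iff_ae_notMem.mp (measure_singleton L)
    filter_upwards [hne] with y hy hmem
    rw [Set.mem_uIoc] at hmem
    have hyIoo : y ∈ Set.Ico (0:ℝ) L := by
      simp only [Set.mem_singleton_iff] at hy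
      rcases hmem with h | h
      · exact ⟨le_trans hu.1 h.1.le, lt_of_le_of_ne (le_trans h.2 hv.2) hy⟩
      · exact ⟨le_trans hv.1 h.1.le, lt_of_le_of_ne (le_trans h.2 hu.2) hy⟩
    show Rad a y * f' y = f' y
    rw [Rad_one_of_mem hyIoo, one_mul]
  -- the two half-period integrals
  have I1 : (∫ y in (0:ℝ)..L, g y) = L * c' := by
    rw [gf' 0 L ⟨le_rfl, hL.le⟩ ⟨hL.le, le_rfl⟩, hf'.mean]
  have If' : (∫ y in L..(2*L), f' y) = L * c' := by
    have h := intervalIntegral.integral_comp_add_right f' L (a := (0:ℝ)) (b := L)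
    have h2 : ∀ y : ℝ, f' (y + L) = f' y := fun y => hf'.per y
    rw [intervalIntegral.integral_congr (g := f') (fun y _ => h2 y)] at h
    have h3 : (∫ y in L..(2*L), f' y) = ∫ y in ((0:ℝ)+L)..(L+L), f' y := by
      norm_num [two_mul]
    rw [h3, ← h, hf'.mean]
  have I2 : (∫ y in L..(2*L), g y) = -(L * c') := by
    have : (∫ y in L..(2*L), g y) = ∫ y in L..(2*L), -(f' y) := by
      apply intervalIntegral.integral_congr_ae
      have hne : ∀ᵐ y : ℝ, y ∉ ({2*L} : Set ℝ) :=
        measure_eq_zero_iff_ae_notMem.mp (measure_singleton (2*L))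
      filter_upwards [hne] with y hy hmem
      rw [Set.uIoc_of_le (by linarith)] at hmem
      have hyIco : y ∈ Set.Ico L (2*L) := by
        simp only [Set.mem_singleton_iff] at hy
        exact ⟨hmem.1.le, lt_of_le_of_ne hmem.2 hy⟩
      show Rad a y * f' y = -(f' y)
      rw [Rad_neg_one_of_mem hyIco]; ring
    rw [this, intervalIntegral.integral_neg, If']
  have f2L : f (2*L) = 0 := by
    show (∫ y in (0:ℝ)..(2*L), g y) = 0
    rw [← intervalIntegral.integral_add_adjacent_intervals (gint 0 L) (gint L (2*L)),
      I1, I2]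
    ring
  have f2L' : (∫ y in (0:ℝ)..(2*L), g y) = 0 := f2L
  have fL : f L = L * c' := I1
  -- periodicity of f
  have fper : Function.Periodic f (2 * L) := by
    intro x
    have hsplit : f x + (∫ y in x..(x + 2*L), g y) = f (x + 2*L) :=
      intervalIntegral.integral_add_adjacent_intervals (gint 0 x) (gint x (x + 2*L))
    have hper : (∫ y in x..(x + 2*L), g y) = ∫ y in (0:ℝ)..(0 + 2*L), g y :=
      gper.intervalIntegral_add_eq x 0
    rw [← hsplit, hper]
    simp only [zero_add]
    rw [f2L']; ring
  -- reflection of f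
  have frefl : ∀ x, f (2 * L - x) = f x := by
    intro x
    have hsplit : f (2*L - x) + (∫ y in (2*L - x)..(2*L), g y) = f (2*L) :=
      intervalIntegral.integral_add_adjacent_intervals (gint 0 (2*L - x)) (gint (2*L - x) (2*L))
    have hcomp : (∫ y in (0:ℝ)..x, g (2*L - y)) = ∫ y in (2*L - x)..(2*L - 0), g y :=
      intervalIntegral.integral_comp_sub_left g (2*L)
    have hae : (∫ y in (0:ℝ)..x, g (2*L - y)) = ∫ y in (0:ℝ)..x, -(g y) := by
      apply intervalIntegral.integral_congr_ae
      have hdy : ∀ᵐ y : ℝ, y ∉ Dyad a :=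
        measure_eq_zero_iff_ae_notMem.mp (Dyad_measure_zero a)
      filter_upwards [hdy] with y hy _
      have hRad : Rad a (2*L - y) = - Rad a y := by
        have h1 : (2:ℝ)*L - y = -y + 2 * L := by ring
        have h2 : Rad a (-y + 2 * ((2:ℝ)^a)⁻¹) = Rad a (-y) := Rad_periodic a (-y)
        rw [h1]
        rw [show (2:ℝ) * L = 2 * ((2:ℝ)^a)⁻¹ from rfl] at *
        rw [h2, Rad_neg hy]
      show Rad a (2*L - y) * f' (2*L - y) = -(Rad a y * f' y)
      rw [hRad, f'refl2]; ring
    have : f (2*L - x) = - ∫ y in (2*L - x)..(2*L), g y := by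
      rw [f2L] at hsplit
      linarith [hsplit]
    rw [this, ← (by rw [sub_zero] : (∫ y in (2*L - x)..(2*L - 0), g y) = ∫ y in (2*L - x)..(2*L), g y),
      ← hcomp, hae, intervalIntegral.integral_neg, neg_neg]
  -- monotonicity on [0, L]
  have fmono : MonotoneOn f (Set.Icc 0 L) := by
    intro u hu v hv huv
    have hsplit : f u + (∫ y in u..v, g y) = f v :=
      intervalIntegral.integral_add_adjacent_intervals (gint 0 u) (gint u v)
    have : (∫ y in u..v, g y) = ∫ y in u..v, f' y := gf' u v hu hv
    have hnn : 0 ≤ ∫ y in u..v, f' y :=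
      intervalIntegral.integral_nonneg huv (fun y _ => hf'.nonneg y)
    linarith [hsplit, this ▸ hnn]
  have f0 : f 0 = 0 := intervalIntegral.integral_same
  -- global bounds
  have fbounds : ∀ x, 0 ≤ f x ∧ f x ≤ L * c' := by
    intro x
    obtain ⟨y, hy, hxy⟩ := exists_rep (by linarith : (0:ℝ) < 2*L) fper frefl x
    have hy' : y ∈ Set.Icc (0:ℝ) L := by
      constructor
      · exact hy.1
      · have := hy.2; linarith
    constructor
    · rw [hxy, ← f0]
      exact fmono ⟨le_rfl, hL.le⟩ hy' hy'.1
    · rw [hxy, ← fL]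
      exact fmono hy' ⟨hL.le, le_rfl⟩ hy'.2
  -- mean of f over [0, L]
  have key : ∀ x ∈ Set.Icc (0:ℝ) L, f x + f (L - x) = L * c' := by
    intro x hx
    have hx' : L - x ∈ Set.Icc (0:ℝ) L := ⟨by linarith [hx.2], by linarith [hx.1]⟩
    have h1 : f x + (∫ y in x..L, g y) = f L :=
      intervalIntegral.integral_add_adjacent_intervals (gint 0 x) (gint x L)
    have h2 : (∫ y in (0:ℝ)..(L - x), g (L - y)) = ∫ y in (L - (L - x))..(L - 0), g y :=
      intervalIntegral.integral_comp_sub_left g L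
    have h2' : (L - (L - x)) = x := by ring
    have h3 : (∫ y in (0:ℝ)..(L - x), g (L - y)) = ∫ y in (0:ℝ)..(L-x), f' y := by
      apply intervalIntegral.integral_congr_ae
      have hdy : ∀ᵐ y : ℝ, y ∉ Dyad a ∧ y ∉ ({(0:ℝ)} : Set ℝ) := by
        have u1 : ∀ᵐ y : ℝ, y ∉ Dyad a :=
          measure_eq_zero_iff_ae_notMem.mp (Dyad_measure_zero a)
        have u2 : ∀ᵐ y : ℝ, y ∉ ({(0:ℝ)} : Set ℝ) :=
          measure_eq_zero_iff_ae_notMem.mp (measure_singleton 0)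
        filter_upwards [u1, u2] with y a b; exact ⟨a, b⟩
      filter_upwards [hdy] with y ⟨hy1, hy2⟩ hmem
      rw [Set.uIoc_of_le (by linarith [hx.2])] at hmem
      have hyI : L - y ∈ Set.Ico (0:ℝ) L := by
        constructor
        · have := hmem.2; linarith [hx.1]
        · have := hmem.1; linarith
      show Rad a (L - y) * f' (L - y) = f' y
      rw [f'refl, Rad_one_of_mem hyI, one_mul]
    have h4 : (∫ y in (0:ℝ)..(L-x), f' y) = ∫ y in (0:ℝ)..(L-x), g y :=
      (gf' 0 (L-x) ⟨le_rfl, hL.le⟩ hx').symm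
    -- so ∫_x^L g = ∫_0^{L-x} g = f (L-x)
    have h5 : (∫ y in x..L, g y) = f (L - x) := by
      show _ = (∫ y in (0:ℝ)..(L-x), g y)
      rw [← h4, ← h3, h2, h2', sub_zero]
    rw [h5] at h1
    rw [← fL]; linarith [h1]
  have meanL : (∫ x in (0:ℝ)..L, f x) = L * (L * c') / 2 := by
    have hint : IntervalIntegrable f volume 0 L := fcont.intervalIntegrable 0 L
    have hint2 : IntervalIntegrable (fun x => f (L - x)) volume 0 L :=
      (fcont.comp (by continuity)).intervalIntegrable 0 L
    have hrefl : (∫ x in (0:ℝ)..L, f (L - x)) = ∫ x in (0:ℝ)..L, f x := by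
      have := intervalIntegral.integral_comp_sub_left f L (a := (0:ℝ)) (b := L)
      simpa using this
    have hsum : (∫ x in (0:ℝ)..L, (f x + f (L - x))) = ∫ x in (0:ℝ)..L, (L * c') := by
      apply intervalIntegral.integral_congr
      intro x hx
      rw [Set.uIcc_of_le hL.le] at hx
      exact key x hx
    rw [intervalIntegral.integral_add hint hint2, hrefl] at hsum
    simp only [intervalIntegral.integral_const, smul_eq_mul, sub_zero] at hsum
    linarith [hsum]
  have mean2L : (∫ x in (0:ℝ)..(2*L), f x) = (2*L) * (L * c' / 2) := by
    have hs : (∫ x in (0:ℝ)..(2*L), f x)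
        = (∫ x in (0:ℝ)..L, f x) + ∫ x in L..(2*L), f x :=
      (intervalIntegral.integral_add_adjacent_intervals
        (fcont.intervalIntegrable 0 L) (fcont.intervalIntegrable L (2*L))).symm
    have hcomp : (∫ x in (0:ℝ)..L, f (x + L)) = ∫ x in (0+L)..(L+L), f x :=
      intervalIntegral.integral_comp_add_right f L
    have heq : (∫ x in (0:ℝ)..L, f (x + L)) = ∫ x in (0:ℝ)..L, f (L - x) := by
      apply intervalIntegral.integral_congr
      intro x _
      show f (x + L) = f (L - x)
      have h := frefl (x + L)
      have he : (2:ℝ)*L - (x + L) = L - x := by ring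
      rw [he] at h
      exact h.symm
    have hrefl : (∫ x in (0:ℝ)..L, f (L - x)) = ∫ x in (0:ℝ)..L, f x := by
      have := intervalIntegral.integral_comp_sub_left f L (a := (0:ℝ)) (b := L)
      simpa using this
    have h2nd : (∫ x in L..(2*L), f x) = ∫ x in (0:ℝ)..L, f x := by
      rw [← hrefl, ← heq, hcomp]
      norm_num [two_mul]
    rw [hs, h2nd, meanL]
    ring
  refine ⟨⟨fcont, fun x => (fbounds x).1, fper, ?_, mean2L⟩, fun x => (fbounds x).2, fL⟩
  · intro x
    have : -x = 2*L - (x + 2*L) := by ring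
    rw [this, frefl, fper]

/-! ### The recursion along exponent lists -/

/-- Real-valued version of `WAux`, indexed by the list of exponents `a_i` (lowest first). -/
def WR : List ℕ → ℝ → ℝ
  | [], _ => 1
  | a :: r, x => ∫ y in (0:ℝ)..x, Rad a y * WR r y

/-- The mean value `2^{-(μ+v)}`. -/
def ce (e : List ℕ) : ℝ := ((2:ℝ) ^ (e.sum + e.length))⁻¹

lemma ce_pos (e : List ℕ) : 0 < ce e := by unfold ce; positivity

lemma ce_cons (a : ℕ) (r : List ℕ) : ce (a :: r) = ((2:ℝ)^a)⁻¹ * ce r / 2 := by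
  unfold ce
  simp only [List.sum_cons, List.length_cons]
  rw [show a + r.sum + (r.length + 1) = a + (r.sum + r.length) + 1 by ring]
  rw [pow_succ, pow_add]
  field_simp

lemma scale_arith {a b : ℕ} (h : b < a) :
    ((2:ℝ)^(a - 1 - b)) * (2 * ((2:ℝ)^a)⁻¹) = ((2:ℝ)^b)⁻¹ := by
  obtain ⟨c, rfl⟩ : ∃ c, a = c + 1 + b := ⟨a - 1 - b, by omega⟩
  have hc : c + 1 + b - 1 - b = c := by omega
  rw [hc, pow_add, pow_add]
  field_simp

lemma WR_package (e : List ℕ) (hp : List.Pairwise (· < ·) e) (h1 : ∀ a ∈ e, 1 ≤ a) :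
    (∀ b : ℕ, (∀ a ∈ e, b < a) → Nice (WR e) (((2:ℝ)^b)⁻¹) (ce e))
    ∧ (∀ a r, e = a :: r →
        (∀ x, WR e x ≤ 2 * ce e) ∧ WR e (((2:ℝ)^a)⁻¹) = 2 * ce e ∧ WR e 0 = 0) := by
  induction e with
  | nil =>
    constructor
    · intro b _
      refine ⟨continuous_const, fun x => zero_le_one, fun x => by simp [WR], fun x => rfl, ?_⟩
      simp [WR, ce]
    · rintro a r ⟨⟩
  | cons a r ih =>
    have hpr : List.Pairwise (· < ·) r := (List.pairwise_cons.mp hp).2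
    have h1r : ∀ a' ∈ r, 1 ≤ a' := fun a' h => h1 a' (List.mem_cons_of_mem _ h)
    have hlt : ∀ a' ∈ r, a < a' := (List.pairwise_cons.mp hp).1
    have ha1 : 1 ≤ a := h1 a (List.mem_cons_self)
    obtain ⟨ihNice, -⟩ := ih hpr h1r
    have hNice : Nice (WR r) (((2:ℝ)^a)⁻¹) (ce r) := ihNice a hlt
    obtain ⟨hN, hBd, hMax⟩ := step a hNice
    have hWR : WR (a :: r) = fun x => ∫ y in (0:ℝ)..x, Rad a y * WR r y := rfl
    have hce : 2 * ce (a :: r) = ((2:ℝ)^a)⁻¹ * ce r := by rw [ce_cons]; ring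
    have hN' : Nice (WR (a :: r)) (2 * ((2:ℝ)^a)⁻¹) (ce (a :: r)) := by
      rw [hWR, ce_cons]; exact hN
    constructor
    · intro b hb
      have hba : b < a := hb a (List.mem_cons_self)
      have hs := hN'.scale (2 ^ (a - 1 - b))
      push_cast at hs
      rwa [scale_arith hba] at hs
    · rintro a' r' heq
      injection heq with h1' h2'
      subst h1'; subst h2'
      refine ⟨fun x => ?_, ?_, ?_⟩
      · rw [hWR, hce]; exact hBd x
      · rw [hWR, hce]; exact hMax
      · rw [hWR]; exact intervalIntegral.integral_same

/-! ### Binary digits of `k` -/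

/-- the increasing list of exponents `a` (with `2^(a-1)` appearing in `k`), lowest first. -/
def E (k : ℕ) : List ℕ :=
  (((Nat.digits 2 k).zipIdx.map Prod.swap).filter fun p => p.2 ≠ 0).map fun p => p.1 + 1

lemma filter_snd_eq_one {k : ℕ} {p : ℕ × ℕ}
    (hp : p ∈ ((Nat.digits 2 k).zipIdx.map Prod.swap).filter fun p => p.2 ≠ 0) : p.2 = 1 := by
  rw [List.mem_filter] at hp
  have h2 : p.2 ∈ Nat.digits 2 k := by
    obtain ⟨q, hq, rfl⟩ := List.mem_map.mp hp.1
    exact List.fst_mem_of_mem_zipIdx hq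
  have hlt : p.2 < 2 := Nat.digits_lt_base (by norm_num) h2
  have hne : p.2 ≠ 0 := by simpa using hp.2
  omega

lemma terms_two_eq (k : ℕ) : terms 2 k = (E k).map fun a => 2^(a-1) := by
  unfold terms E
  rw [List.map_map]
  apply List.map_congr_left
  intro p hp
  have h2 : p.2 = 1 := filter_snd_eq_one hp
  simp [h2, Function.comp]

lemma mu_two_eq (k : ℕ) : mu 2 k = (E k).sum := by
  unfold mu alist E
  rw [List.sum_reverse]

lemma nu_two_eq (k : ℕ) : nu 2 k = (E k).length := by
  unfold nu terms E
  simp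

lemma E_pairwise (k : ℕ) : List.Pairwise (· < ·) (E k) := by
  unfold E
  rw [List.pairwise_map]
  have henum : List.Pairwise (fun p q : ℕ × ℕ => p.1 < q.1)
      ((Nat.digits 2 k).zipIdx.map Prod.swap) := by
    rw [List.pairwise_map, List.pairwise_iff_getElem]
    intro i j hi hj hij
    simp only [List.getElem_zipIdx, Prod.swap]
    simpa using hij
  exact (henum.filter _).imp (by intro p q h; omega)

lemma E_one_le (k : ℕ) : ∀ a ∈ E k, 1 ≤ a := by
  intro a ha
  unfold E at ha
  rw [List.mem_map] at ha
  obtain ⟨p, -, rfl⟩ := ha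
  omega

lemma E_ne_nil {k : ℕ} (hk : k ≠ 0) : E k ≠ [] := by
  have hd : Nat.digits 2 k ≠ [] := Nat.digits_ne_nil_iff_ne_zero.mpr hk
  have hlast : (Nat.digits 2 k).getLast hd ≠ 0 := Nat.getLast_digit_ne_zero 2 hk
  have hmem : (Nat.digits 2 k).getLast hd ∈ Nat.digits 2 k := List.getLast_mem hd
  obtain ⟨i, hi⟩ := List.mem_iff_get.mp hmem
  intro hE
  unfold E at hE
  rw [List.map_eq_nil_iff] at hE
  have : ((i : ℕ), (Nat.digits 2 k).getLast hd) ∈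
      ((Nat.digits 2 k).zipIdx.map Prod.swap).filter fun p => p.2 ≠ 0 := by
    rw [List.mem_filter]
    constructor
    · rw [List.mem_map]
      refine ⟨((Nat.digits 2 k).getLast hd, (i : ℕ)), ?_, rfl⟩
      rw [List.mem_zipIdx_iff_getElem?]
      simp [← hi]
    · simpa using hlast
  rw [hE] at this
  exact absurd this List.not_mem_nil

/-! ### Identifying `wal` at powers of two with Rademacher functions -/

lemma omega_two : omega 2 = -1 := by
  unfold omega
  have h : 2 * (Real.pi : ℂ) * Complex.I / ((2:ℕ):ℂ) = Real.pi * Complex.I := by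
    push_cast; ring
  rw [h, Complex.exp_pi_mul_I]

lemma wal_two_pow {a : ℕ} (ha : 1 ≤ a) (y : ℝ) :
    wal 2 (2^(a-1)) y = ((Rad a y : ℝ) : ℂ) := by
  unfold wal
  rw [omega_two]
  have hsum : (∑ j ∈ Finset.range (2^(a-1)), (2^(a-1) / 2 ^ j % 2) * xdigit 2 (j+1) y)
      = xdigit 2 a y := by
    rw [Finset.sum_eq_single (a-1)]
    · have h1 : (2:ℕ)^(a-1) / 2^(a-1) % 2 = 1 := by
        rw [Nat.div_self (by positivity)]
      rw [h1, one_mul]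
      congr 1
      omega
    · intro j _ hne
      rcases lt_or_gt_of_ne hne with h | h
      · have hd : (2:ℕ)^(a-1) / 2^j = 2^(a-1-j) := Nat.pow_div (by omega) (by norm_num)
        have hm : (2:ℕ)^(a-1-j) % 2 = 0 := by
          obtain ⟨c, hc⟩ : ∃ c, a-1-j = c+1 := ⟨a-1-j-1, by omega⟩
          rw [hc, pow_succ, Nat.mul_mod_left]
        rw [hd, hm, zero_mul]
      · have hd : (2:ℕ)^(a-1) / 2^j = 0 :=
          Nat.div_eq_of_lt (Nat.pow_lt_pow_right (by norm_num) h)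
        rw [hd]
        simp
    · intro h
      exact absurd (Finset.mem_range.mpr (Nat.lt_two_pow_self (n := a-1))) h
  rw [hsum]
  rw [Rad]
  push_cast
  rfl

lemma WAux_eq_WR (e : List ℕ) (he : ∀ a ∈ e, 1 ≤ a) (x : ℝ) :
    WAux 2 (e.map fun a => 2^(a-1)) x = ((WR e x : ℝ) : ℂ) := by
  induction e generalizing x with
  | nil => simp [WAux, WR]
  | cons a r ih =>
    have ha : 1 ≤ a := he a (List.mem_cons_self)
    have hr : ∀ a' ∈ r, 1 ≤ a' := fun a' h => he a' (List.mem_cons_of_mem _ h)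
    have h0 : WAux 2 ((a :: r).map fun a => 2^(a-1)) x
        = ∫ y in (0:ℝ)..x, (starRingEnd ℂ) (wal 2 (2^(a-1)) y)
            * WAux 2 (r.map fun a => 2^(a-1)) y := rfl
    rw [h0]
    have hpt : ∀ y : ℝ, (starRingEnd ℂ) (wal 2 (2^(a-1)) y)
        * WAux 2 (r.map fun a => 2^(a-1)) y = (((Rad a y * WR r y : ℝ)) : ℂ) := by
      intro y
      rw [wal_two_pow ha, Complex.conj_ofReal, ih hr y, ← Complex.ofReal_mul]
    rw [intervalIntegral.integral_congr (fun y _ => hpt y)]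
    have : WR (a :: r) x = ∫ y in (0:ℝ)..x, Rad a y * WR r y := rfl
    rw [this]
    exact_mod_cast RCLike.intervalIntegral_ofReal (𝕜 := ℂ) (f := fun y => Rad a y * WR r y)

lemma W_two_eq (k : ℕ) (x : ℝ) : W 2 k x = ((WR (E k) x : ℝ) : ℂ) := by
  unfold W
  rw [terms_two_eq, WAux_eq_WR _ (E_one_le k)]

/-! ### Norm computations -/

lemma E_zero : E 0 = [] := by simp [E]

lemma nu_pos_iff {k : ℕ} (hk : k ≠ 0) : 1 ≤ nu 2 k := by
  obtain ⟨a, r, hE⟩ := List.exists_cons_of_ne_nil (E_ne_nil hk)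
  rw [nu_two_eq, hE]
  simp

set_option maxHeartbeats 1600000 in
theorem W_Lq_dyadic' (k : ℕ) :
    (∀ q : ℝ≥0∞, 1 ≤ q →
      eLpNorm (W 2 k) q (volume.restrict (Set.Icc (0:ℝ) 1)) ≤
        ENNReal.ofReal ((2:ℝ) ^ (-(mu 2 k : ℝ) - (nu 2 k : ℝ) +
          (1 - 1 / q.toReal) * (min 1 (nu 2 k) : ℝ)))) ∧
    eLpNorm (W 2 k) 1 (volume.restrict (Set.Icc (0:ℝ) 1)) =
      ENNReal.ofReal ((2:ℝ) ^ (-(mu 2 k : ℝ) - (nu 2 k : ℝ))) ∧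
    eLpNorm (W 2 k) ⊤ (volume.restrict (Set.Icc (0:ℝ) 1)) =
      ENNReal.ofReal ((2:ℝ) ^ (-(mu 2 k : ℝ) - (nu 2 k : ℝ) + (min 1 (nu 2 k) : ℝ))) := by
  set μ : Measure ℝ := volume.restrict (Set.Icc (0:ℝ) 1) with hμdef
  have hμuniv : μ Set.univ = 1 := by
    rw [hμdef, Measure.restrict_apply MeasurableSet.univ, Set.univ_inter, Real.volume_Icc]
    norm_num
  by_cases hk : k = 0
  · -- trivial case k = 0
    subst hk
    have hW : W 2 0 = fun _ => (1:ℂ) := by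
      funext x
      rw [W_two_eq, E_zero]
      simp [WR]
    have hmu : mu 2 0 = 0 := by rw [mu_two_eq, E_zero]; rfl
    have hnu : nu 2 0 = 0 := by rw [nu_two_eq, E_zero]; rfl
    have hμne : μ ≠ 0 := by
      intro h
      rw [h] at hμuniv
      simp at hμuniv
    have hconst : ∀ q : ℝ≥0∞, q ≠ 0 → eLpNorm (W 2 0) q μ = 1 := by
      intro q hq
      rw [hW, eLpNorm_const (1:ℂ) hq hμne, hμuniv]
      simp
    refine ⟨fun q hq => ?_, ?_, ?_⟩
    · rw [hconst q (by positivity)]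
      rw [hmu, hnu]
      norm_num
    · rw [hconst 1 one_ne_zero, hmu, hnu]
      norm_num
    · rw [hconst ⊤ (by norm_num), hmu, hnu]
      norm_num
  · -- main case k ≠ 0
    obtain ⟨aa, r, hE⟩ := List.exists_cons_of_ne_nil (E_ne_nil hk)
    set e : List ℕ := E k with hedef
    set f : ℝ → ℝ := WR e with hfdef
    set c : ℝ := ce e with hcdef
    have hc0 : 0 < c := ce_pos e
    obtain ⟨hNiceAll, hExtra⟩ := WR_package e (E_pairwise k) (E_one_le k)
    have hNice1 : Nice f 1 c := by
      have h := hNiceAll 0 (fun a ha => lt_of_lt_of_le zero_lt_one (E_one_le k a ha))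
      norm_num at h
      exact h
    obtain ⟨hBd, hMax, -⟩ := hExtra aa r hE
    have haa1 : 1 ≤ aa := E_one_le k aa (by rw [← hedef, hE]; exact List.mem_cons_self)
    set xm : ℝ := ((2:ℝ)^aa)⁻¹ with hxmdef
    have hxm0 : 0 < xm := by positivity
    have hxm1 : xm ≤ 1 := by
      rw [hxmdef]
      rw [inv_le_one_iff₀]
      right
      exact one_le_pow₀ (by norm_num)
    have hMean : (∫ y in (0:ℝ)..1, f y) = c := by
      have := hNice1.mean
      simpa using this
    have hv1 : 1 ≤ nu 2 k := nu_pos_iff hk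
    -- real exponent identities
    set m : ℕ := mu 2 k with hmdef
    set v : ℕ := nu 2 k with hvdef
    have hminR : min (1:ℝ) ((v:ℕ):ℝ) = 1 := by
      apply min_eq_left
      exact_mod_cast hv1
    have hcval : c = (2:ℝ) ^ (-(m:ℝ) - (v:ℝ)) := by
      have h1 : m + v = e.sum + e.length := by
        rw [hmdef, hvdef, mu_two_eq, nu_two_eq]
      rw [hcdef]
      unfold ce
      rw [← h1]
      rw [show -(m:ℝ) - (v:ℝ) = -((m+v : ℕ) : ℝ) by push_cast; ring]
      rw [Real.rpow_neg (by norm_num), Real.rpow_natCast]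
    have hBval : 2 * c = (2:ℝ) ^ (-(m:ℝ) - (v:ℝ) + 1) := by
      rw [hcval, Real.rpow_add (by norm_num : (0:ℝ) < 2), Real.rpow_one]
      ring
    -- norms of W
    have hWnorm : ∀ x, ‖W 2 k x‖ = f x := by
      intro x
      rw [W_two_eq]
      rw [Complex.norm_real, Real.norm_eq_abs, _root_.abs_of_nonneg (hNice1.nonneg x)]
    have hWnn : ∀ x, (‖W 2 k x‖₊ : ℝ≥0∞) = ENNReal.ofReal (f x) := by
      intro x
      rw [← enorm_eq_nnnorm, ← ofReal_norm, hWnorm]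
    -- the L¹ lintegral
    have hfint : Integrable f μ := hNice1.cont.integrableOn_Icc
    have hL1 : (∫⁻ x, (‖W 2 k x‖₊ : ℝ≥0∞) ∂μ) = ENNReal.ofReal c := by
      have h1 : (∫⁻ x, (‖W 2 k x‖₊ : ℝ≥0∞) ∂μ) = ∫⁻ x, ENNReal.ofReal (f x) ∂μ :=
        lintegral_congr fun x => hWnn x
      rw [h1, ← ofReal_integral_eq_lintegral_ofReal hfint
        (Filter.Eventually.of_forall fun x => hNice1.nonneg x)]
      congr 1
      rw [hμdef]
      rw [MeasureTheory.integral_Icc_eq_integral_Ioc,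
        ← intervalIntegral.integral_of_le (by norm_num : (0:ℝ) ≤ 1)]
      exact hMean
    have hL1norm : eLpNorm (W 2 k) 1 μ = ENNReal.ofReal c := by
      rw [eLpNorm_one_eq_lintegral_enorm]; simp only [enorm_eq_nnnorm]; rw [hL1]
    -- L∞
    have hTop : eLpNorm (W 2 k) ⊤ μ = ENNReal.ofReal (2 * c) := by
      rw [eLpNorm_exponent_top]
      apply le_antisymm
      · exact eLpNormEssSup_le_of_ae_bound
          (Filter.Eventually.of_forall fun x => by rw [hWnorm]; exact hBd x)
      · by_contra hcon
        push_neg at hcon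
        set t : ℝ≥0∞ := eLpNormEssSup (W 2 k) μ with htdef
        have htne : t ≠ ⊤ := hcon.trans_le le_top |>.ne
        have htlt : t.toReal < 2 * c := by
          rw [← ENNReal.lt_ofReal_iff_toReal_lt htne]
          exact hcon
        set S : Set ℝ := {x | t.toReal < f x} with hSdef
        have hSopen : IsOpen S := isOpen_lt continuous_const hNice1.cont
        have hxmS : xm ∈ S := by
          rw [hSdef]
          show t.toReal < f xm
          rw [hfdef, hMax]
          exact htlt
        obtain ⟨ε, hε0, hball⟩ := Metric.isOpen_iff.mp hSopen xm hxmS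
        set δ : ℝ := min ε xm with hδdef
        have hδ0 : 0 < δ := lt_min hε0 hxm0
        have hJS : Set.Ioo (xm - δ) xm ⊆ S := by
          intro y hy
          apply hball
          rw [Metric.mem_ball, Real.dist_eq, abs_sub_lt_iff]
          constructor
          · linarith [hy.2]
          · have := hy.1
            have hδε : δ ≤ ε := min_le_left _ _
            linarith
        have hJIcc : Set.Ioo (xm - δ) xm ⊆ Set.Icc (0:ℝ) 1 := by
          intro y hy
          constructor
          · have hδxm : δ ≤ xm := min_le_right _ _
            have := hy.1; linarith
          · have := hy.2; linarith
        have hμJ : 0 < μ (Set.Ioo (xm - δ) xm) := by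
          rw [hμdef, Measure.restrict_apply measurableSet_Ioo,
            Set.inter_eq_self_of_subset_left hJIcc, Real.volume_Ioo]
          rw [show xm - (xm - δ) = δ by ring]
          exact ENNReal.ofReal_pos.mpr hδ0
        have hbad : μ {x | t < (‖W 2 k x‖₊ : ℝ≥0∞)} = 0 := by
          have h := ae_le_eLpNormEssSup (f := W 2 k) (μ := μ)
          rw [ae_iff] at h
          convert h using 2
          ext x
          simp [not_le]
          rfl
        have hsub : Set.Ioo (xm - δ) xm ⊆ {x | t < (‖W 2 k x‖₊ : ℝ≥0∞)} := by
          intro y hy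
          have hyS : y ∈ S := hJS hy
          have : t.toReal < f y := hyS
          rw [Set.mem_setOf_eq, hWnn]
          rw [ENNReal.lt_ofReal_iff_toReal_lt htne]
          exact this
        exact absurd (measure_mono_null hsub hbad) (ne_of_gt hμJ)
    refine ⟨?_, ?_, ?_⟩
    · -- general q
      intro q hq
      have hq0 : q ≠ 0 := (lt_of_lt_of_le zero_lt_one hq).ne'
      by_cases hqtop : q = ⊤
      · subst hqtop
        rw [hTop, hBval]
        apply le_of_eq
        congr 2
        rw [hminR]
        norm_num
      · set p : ℝ := q.toReal with hpdef
        have hp1 : 1 ≤ p := by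
          rw [hpdef, ← ENNReal.toReal_one]
          exact ENNReal.toReal_mono hqtop hq
        have hp0 : 0 < p := lt_of_lt_of_le zero_lt_one hp1
        rw [eLpNorm_eq_lintegral_rpow_enorm_toReal hq0 hqtop, ← hpdef]
        simp only [enorm_eq_nnnorm]
        have hpt : ∀ x, (‖W 2 k x‖₊ : ℝ≥0∞) ^ p ≤
            (ENNReal.ofReal (2*c)) ^ (p - 1) * (‖W 2 k x‖₊ : ℝ≥0∞) := by
          intro x
          rcases eq_or_lt_of_le (hNice1.nonneg x) with h0 | h0
          · rw [hWnn, ← h0]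
            simp only [ENNReal.ofReal_zero]
            rw [ENNReal.zero_rpow_of_pos hp0]
            exact zero_le
          · have hne0 : (‖W 2 k x‖₊ : ℝ≥0∞) ≠ 0 := by
              rw [hWnn]
              simp only [ne_eq, ENNReal.ofReal_eq_zero, not_le]
              exact h0
            have hnetop : (‖W 2 k x‖₊ : ℝ≥0∞) ≠ ⊤ := ENNReal.coe_ne_top
            calc (‖W 2 k x‖₊ : ℝ≥0∞) ^ p
                = (‖W 2 k x‖₊ : ℝ≥0∞) ^ (p - 1 + 1) := by norm_num
              _ = (‖W 2 k x‖₊ : ℝ≥0∞) ^ (p - 1) * (‖W 2 k x‖₊ : ℝ≥0∞) ^ (1:ℝ) :=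
                  ENNReal.rpow_add _ _ hne0 hnetop
              _ = (‖W 2 k x‖₊ : ℝ≥0∞) ^ (p - 1) * (‖W 2 k x‖₊ : ℝ≥0∞) := by
                  rw [ENNReal.rpow_one]
              _ ≤ (ENNReal.ofReal (2*c)) ^ (p - 1) * (‖W 2 k x‖₊ : ℝ≥0∞) := by
                  apply mul_le_mul_left
                  apply ENNReal.rpow_le_rpow _ (by linarith)
                  rw [hWnn]
                  exact ENNReal.ofReal_le_ofReal (hBd x)
        have hlin : (∫⁻ x, (‖W 2 k x‖₊ : ℝ≥0∞) ^ p ∂μ) ≤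
            (ENNReal.ofReal (2*c)) ^ (p - 1) * ENNReal.ofReal c := by
          calc (∫⁻ x, (‖W 2 k x‖₊ : ℝ≥0∞) ^ p ∂μ)
              ≤ ∫⁻ x, (ENNReal.ofReal (2*c)) ^ (p - 1) * (‖W 2 k x‖₊ : ℝ≥0∞) ∂μ :=
                lintegral_mono hpt
            _ = (ENNReal.ofReal (2*c)) ^ (p - 1) * ∫⁻ x, (‖W 2 k x‖₊ : ℝ≥0∞) ∂μ := by
                rw [lintegral_const_mul' _ _ (by
                  apply ENNReal.rpow_ne_top_of_nonneg (by linarith)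
                  exact ENNReal.ofReal_ne_top)]
            _ = (ENNReal.ofReal (2*c)) ^ (p - 1) * ENNReal.ofReal c := by rw [hL1]
        calc (∫⁻ x, (‖W 2 k x‖₊ : ℝ≥0∞) ^ p ∂μ) ^ (1/p)
            ≤ ((ENNReal.ofReal (2*c)) ^ (p - 1) * ENNReal.ofReal c) ^ (1/p) :=
              ENNReal.rpow_le_rpow hlin (by positivity)
          _ = ENNReal.ofReal ((2:ℝ) ^ (-(m:ℝ) - (v:ℝ) + (1 - 1/p) * (min (1:ℝ) (v:ℝ)))) := by
              rw [ENNReal.mul_rpow_of_nonneg _ _ (by positivity)]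
              rw [← ENNReal.rpow_mul]
              rw [hBval, hcval]
              rw [ENNReal.ofReal_rpow_of_pos (by positivity),
                ENNReal.ofReal_rpow_of_pos (by positivity)]
              rw [← ENNReal.ofReal_mul (by positivity)]
              rw [← Real.rpow_mul (by norm_num : (0:ℝ) ≤ 2),
                ← Real.rpow_mul (by norm_num : (0:ℝ) ≤ 2),
                ← Real.rpow_add (by norm_num : (0:ℝ) < 2)]
              congr 1
              rw [hminR]
              field_simp
              ring
          _ = ENNReal.ofReal ((2:ℝ) ^ (-(m:ℝ) - (v:ℝ) + (1 - 1/q.toReal) * (min (1:ℝ) (v:ℝ)))) := by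
              rw [hpdef]
    · rw [hL1norm, hcval]
    · rw [hTop, hBval]
      congr 2
      rw [hminR]


/-- Proposition 3.12 (the `L^q` norms of `W_k` in the dyadic case). -/
theorem W_Lq_dyadic (k : ℕ) :
    (∀ q : ℝ≥0∞, 1 ≤ q →
      eLpNorm (W 2 k) q (volume.restrict (Set.Icc (0:ℝ) 1)) ≤
        ENNReal.ofReal ((2:ℝ) ^ (-(mu 2 k : ℝ) - (nu 2 k : ℝ) +
          (1 - 1 / q.toReal) * (min 1 (nu 2 k) : ℝ)))) ∧
    eLpNorm (W 2 k) 1 (volume.restrict (Set.Icc (0:ℝ) 1)) =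
      ENNReal.ofReal ((2:ℝ) ^ (-(mu 2 k : ℝ) - (nu 2 k : ℝ))) ∧
    eLpNorm (W 2 k) ⊤ (volume.restrict (Set.Icc (0:ℝ) 1)) =
      ENNReal.ofReal ((2:ℝ) ^ (-(mu 2 k : ℝ) - (nu 2 k : ℝ) + (min 1 (nu 2 k) : ℝ))) :=
  W_Lq_dyadic' k

end WalshPaper
end
end
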